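/- arXiv:math/0610509 — 7 statements merged into one kernel-verified Lean document; each statement's English description precedes it below -/
import Mathlib

section
/- If X is a real random variable with a density (its law is absolutely continuous with respect to Lebesgue measure), then the fractional part {nX} converges in distribution, as n → ∞, to the uniform distribution on [0,1]. -/
/-! If `X` has a density, then for `m ≠ 0` the Fourier coefficient `E exp(2πi m n X)` of the
law of `nX` on `ℝ/ℤ` is the characteristic function of `X` at `2π m n`, which tends to `0` by the
Riemann–Lebesgue lemma. Trigonometric polynomials are dense in `C(ℝ/ℤ)` and integration against a
probability measure is `1`-Lipschitz, so `E G(nX) → ∫ G` for every continuous `G` on the circle,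
i.e. `E h({nX}) → ∫₀¹ h` for continuous `h` with `h 0 = h 1`. A continuous `g` differs from such
an `h` by at most `C (2u - 1)^(2k)`, whose integrals against both laws are `O(1/k)`. -/

open MeasureTheory Filter Set
open scoped Real Topology

theorem tendsto_charFun_cocompact_of_absolutelyContinuous {μ : Measure ℝ} [SigmaFinite μ]
    (hac : μ ≪ volume) : Tendsto (charFun μ) (cocompact ℝ) (𝓝 0) := by
  set f : ℝ → ℂ := fun x => ((μ.rnDeriv volume x).toReal : ℂ)
  have hcharFun : charFun μ = FourierTransform.fourier f ∘ fun t => -(2 * π)⁻¹ * t := by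
    ext t
    rw [Function.comp_apply, charFun_apply_real, Real.fourier_real_eq_integral_exp_smul,
      ← integral_rnDeriv_smul hac]
    congr 1 with x
    simp only [f, Complex.real_smul, smul_eq_mul]
    field_simp
    push_cast
    ring_nf
  rw [hcharFun]
  exact (Real.zero_at_infty_fourier f).comp
    (tendsto_cocompact_mul_left₀ (by simp [Real.pi_ne_zero]))

lemma integral_fourier_coe_mul (μ : Measure ℝ) (m : ℤ) (c : ℝ) :
    ∫ x, fourier m ((c * x : ℝ) : UnitAddCircle) ∂μ = charFun μ (2 * π * m * c) := by
  rw [charFun_apply_real]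
  congr 1 with x
  rw [fourier_coe_apply]
  push_cast
  ring_nf

lemma tendsto_integral_fourier_natCast_mul {μ : Measure ℝ} [SigmaFinite μ] (hac : μ ≪ volume)
    {m : ℤ} (hm : m ≠ 0) :
    Tendsto (fun n : ℕ => ∫ x, fourier m ((n * x : ℝ) : UnitAddCircle) ∂μ) atTop (𝓝 0) := by
  simp only [integral_fourier_coe_mul]
  refine (tendsto_charFun_cocompact_of_absolutelyContinuous hac).comp ?_
  have h2πm : 2 * π * m ≠ 0 := by simp [hm, Real.pi_ne_zero]
  exact (tendsto_cocompact_mul_left₀ h2πm).comp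
    (tendsto_natCast_atTop_atTop.mono_right atTop_le_cocompact)

lemma integral_fourier_haarAddCircle {T : ℝ} [Fact (0 < T)] (m : ℤ) :
    ∫ y, fourier m y ∂(AddCircle.haarAddCircle (T := T)) = if m = 0 then 1 else 0 := by
  have := congrFun (fourierCoeff_fourier (T := T) m) 0
  simpa [fourierCoeff, Pi.single_apply, eq_comm] using this

section CompactSpace

variable {X : Type*} [TopologicalSpace X] [CompactSpace X] [MeasurableSpace X]
  [OpensMeasurableSpace X]

lemma ContinuousMap.lipschitzWith_one_integral (ν : Measure X) [IsProbabilityMeasure ν] :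
    LipschitzWith 1 (fun f : C(X, ℂ) => ∫ x, f x ∂ν) := by
  refine LipschitzWith.of_dist_le_mul fun f g => ?_
  have hint : ∀ f : C(X, ℂ), Integrable f ν := fun f =>
    (BoundedContinuousFunction.mkOfCompact f).integrable ν
  rw [dist_eq_norm, ← integral_sub (hint f) (hint g), NNReal.coe_one, one_mul, dist_eq_norm,
    ← BoundedContinuousFunction.norm_mkOfCompact]
  exact (BoundedContinuousFunction.mkOfCompact (f - g)).norm_integral_le_norm ν

theorem tendsto_integral_of_dense_span {ι : Type*} {l : Filter ι} {ν : ι → Measure X}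
    [∀ i, IsProbabilityMeasure (ν i)] {ν₀ : Measure X} [IsProbabilityMeasure ν₀]
    {s : Set C(X, ℂ)} (hs : (Submodule.span ℂ s).topologicalClosure = ⊤)
    (h : ∀ f ∈ s, Tendsto (fun i => ∫ x, f x ∂ν i) l (𝓝 (∫ x, f x ∂ν₀))) (f : C(X, ℂ)) :
    Tendsto (fun i => ∫ x, f x ∂ν i) l (𝓝 (∫ x, f x ∂ν₀)) := by
  have hint : ∀ (ρ : Measure X) [IsProbabilityMeasure ρ] (f : C(X, ℂ)), Integrable f ρ :=
    fun ρ _ f => (BoundedContinuousFunction.mkOfCompact f).integrable ρ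
  let S : Submodule ℂ C(X, ℂ) :=
    { carrier := {f | Tendsto (fun i => ∫ x, f x ∂ν i) l (𝓝 (∫ x, f x ∂ν₀))}
      add_mem' := fun {f g} hf hg => by
        simpa only [mem_ofPred_eq, ContinuousMap.coe_add, Pi.add_apply,
          integral_add (hint _ f) (hint _ g)] using hf.add hg
      zero_mem' := by simpa using tendsto_const_nhds
      smul_mem' := fun c f hf => by
        simpa only [mem_ofPred_eq, ContinuousMap.coe_smul, Pi.smul_apply, integral_smul]
          using hf.const_smul c }
  have hS : IsClosed (S : Set C(X, ℂ)) :=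
    (LipschitzWith.uniformEquicontinuous _ 1 fun i =>
      ContinuousMap.lipschitzWith_one_integral (ν i)).equicontinuous.isClosed_setOfPred_tendsto
      (ContinuousMap.lipschitzWith_one_integral ν₀).continuous
  have hspan : Submodule.span ℂ s ≤ S := Submodule.span_le.2 h
  exact Submodule.topologicalClosure_minimal _ hspan hS (hs ▸ Submodule.mem_top)

end CompactSpace

theorem tendsto_integral_natCast_mul_unitAddCircle {μ : Measure ℝ} [IsProbabilityMeasure μ]
    (hac : μ ≪ volume) (G : C(UnitAddCircle, ℂ)) :
    Tendsto (fun n : ℕ => ∫ x, G ((n * x : ℝ) : UnitAddCircle) ∂μ) atTop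
      (𝓝 (∫ y, G y ∂AddCircle.haarAddCircle)) := by
  have hmeas : ∀ n : ℕ, Measurable fun x : ℝ => ((n * x : ℝ) : UnitAddCircle) := fun n =>
    ((AddCircle.continuous_mk' 1).comp (continuous_const_mul _)).measurable
  have : ∀ n : ℕ, IsProbabilityMeasure (μ.map fun x => ((n * x : ℝ) : UnitAddCircle)) :=
    fun n => Measure.isProbabilityMeasure_map (hmeas n).aemeasurable
  have hmap : ∀ (n : ℕ) (G : C(UnitAddCircle, ℂ)),
      ∫ y, G y ∂(μ.map fun x => ((n * x : ℝ) : UnitAddCircle)) = ∫ x, G (n * x : ℝ) ∂μ :=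
    fun n G => integral_map (hmeas n).aemeasurable G.continuous.aestronglyMeasurable
  simp_rw [← hmap]
  refine tendsto_integral_of_dense_span span_fourier_closure_eq_top ?_ G
  rintro _ ⟨m, rfl⟩
  simp_rw [hmap, integral_fourier_haarAddCircle]
  split_ifs with hm
  · simp [hm]
  · exact tendsto_integral_fourier_natCast_mul hac hm

lemma integral_haarAddCircle_eq_integral_Ioo (G : UnitAddCircle → ℂ) :
    ∫ y, G y ∂AddCircle.haarAddCircle = ∫ x in Ioo (0 : ℝ) 1, G x := by
  calc ∫ y, G y ∂AddCircle.haarAddCircle = ∫ y, G y := by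
        simp [AddCircle.volume_eq_smul_haarAddCircle]
    _ = ∫ x in Ioc (0 : ℝ) 1, G x := by simpa using (UnitAddCircle.integral_preimage 0 G).symm
    _ = ∫ x in Ioo (0 : ℝ) 1, G x := integral_Ioc_eq_integral_Ioo

theorem tendsto_integral_map_fract_mul_of_endpoints_eq {μ : Measure ℝ} [IsProbabilityMeasure μ]
    (hac : μ ≪ volume) {h : ℝ → ℝ} (hh : Continuous h) (h01 : h 0 = h 1) :
    Tendsto (fun n : ℕ => ∫ u, h u ∂(μ.map fun x => Int.fract ((n : ℝ) * x))) atTop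
      (𝓝 (∫ u in Icc (0 : ℝ) 1, h u)) := by
  let G : C(UnitAddCircle, ℂ) :=
    ⟨AddCircle.liftIco 1 0 fun u => (h u : ℂ),
      AddCircle.liftIco_zero_continuous (by simp [h01]) (by fun_prop)⟩
  have hG : ∀ y : ℝ, G y = h (Int.fract y) := fun y => by
    rw [← AddCircle.coe_fract]
    exact AddCircle.liftIco_zero_coe_apply (f := fun u => (h u : ℂ))
      ⟨Int.fract_nonneg y, Int.fract_lt_one y⟩
  have hlhs : ∀ n : ℕ, ∫ u, h u ∂(μ.map fun x => Int.fract ((n : ℝ) * x))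
      = (∫ x, G ((n * x : ℝ) : UnitAddCircle) ∂μ).re := fun n => by
    rw [integral_map (by fun_prop) hh.aestronglyMeasurable]
    simp_rw [hG, integral_complex_ofReal, Complex.ofReal_re]
  have hGIoo : ∀ x ∈ Ioo (0 : ℝ) 1, G x = h x := fun x hx => by
    rw [hG, Int.fract_eq_self.2 ⟨hx.1.le, hx.2⟩]
  have hrhs : ∫ u in Icc (0 : ℝ) 1, h u = (∫ y, G y ∂AddCircle.haarAddCircle).re := by
    rw [integral_haarAddCircle_eq_integral_Ioo, integral_Icc_eq_integral_Ioo,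
      setIntegral_congr_fun measurableSet_Ioo hGIoo, integral_complex_ofReal, Complex.ofReal_re]
  simpa only [hlhs, hrhs, Function.comp_def] using
    (Complex.continuous_re.tendsto _).comp (tendsto_integral_natCast_mul_unitAddCircle hac G)

lemma tendsto_of_forall_approx {α β : Type*} [PseudoMetricSpace β] {l : Filter α} {L : α → β}
    {I : β} (h : ∀ ε > 0, ∃ (H : α → β) (J : β),
      Tendsto H l (𝓝 J) ∧ dist I J ≤ ε ∧ ∀ᶠ a in l, dist (L a) (H a) ≤ ε) :
    Tendsto L l (𝓝 I) := by
  refine Metric.tendsto_nhds.2 fun δ hδ => ?_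
  obtain ⟨H, J, hHJ, hIJ, hLH⟩ := h (δ / 3) (by positivity)
  filter_upwards [Metric.tendsto_nhds.1 hHJ (δ / 3) (by positivity), hLH] with a hHa hLa
  calc dist (L a) I ≤ dist (L a) (H a) + dist (H a) J + dist J I := dist_triangle4 _ _ _ _
    _ < δ := by linarith [dist_comm I J]

lemma abs_integral_sub_integral_le_mul_integral {ρ : Measure ℝ} [IsFiniteMeasure ρ] {s : Set ℝ}
    (hs : IsCompact s) (hρ : ∀ᵐ u ∂ρ, u ∈ s) {f g b : ℝ → ℝ} (hf : Continuous f)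
    (hg : Continuous g) (hb : Continuous b) {C : ℝ} (hfg : ∀ u ∈ s, |f u - g u| ≤ C * b u) :
    |∫ u, f u ∂ρ - ∫ u, g u ∂ρ| ≤ C * ∫ u, b u ∂ρ := by
  have hint : ∀ φ : ℝ → ℝ, Continuous φ → Integrable φ ρ := fun φ hφ => by
    rw [← Measure.restrict_eq_self_of_ae_mem hρ]
    exact hφ.continuousOn.integrableOn_compact hs
  calc |∫ u, f u ∂ρ - ∫ u, g u ∂ρ| = ‖∫ u, (f u - g u) ∂ρ‖ := by
        rw [integral_sub (hint f hf) (hint g hg), Real.norm_eq_abs]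
    _ ≤ ∫ u, C * b u ∂ρ :=
        norm_integral_le_of_norm_le ((hint b hb).const_mul C) (hρ.mono fun u hu => hfg u hu)
    _ = C * ∫ u, b u ∂ρ := integral_const_mul C _

lemma integral_Icc_two_mul_sub_one_pow (k : ℕ) :
    ∫ u in Icc (0 : ℝ) 1, (2 * u - 1) ^ (2 * k) = (2 * k + 1 : ℝ)⁻¹ := by
  rw [integral_Icc_eq_integral_Ioc, ← intervalIntegral.integral_of_le zero_le_one,
    intervalIntegral.integral_comp_mul_sub (fun x => x ^ (2 * k)) two_ne_zero, integral_pow]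
  have : Odd (2 * k + 1) := odd_two_mul_add_one k
  norm_num [this.neg_one_pow]
  field_simp

theorem tendsto_integral_map_fract_mul {μ : Measure ℝ} [IsProbabilityMeasure μ]
    (hac : μ ≪ volume) {g : ℝ → ℝ} (hg : Continuous g) :
    Tendsto (fun n : ℕ => ∫ u, g u ∂(μ.map fun x => Int.fract ((n : ℝ) * x))) atTop
      (𝓝 (∫ u in Icc (0 : ℝ) 1, g u)) := by
  have hfract : ∀ n : ℕ, ∀ᵐ u ∂(μ.map fun x => Int.fract ((n : ℝ) * x)), u ∈ Icc (0 : ℝ) 1 :=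
    fun n => (ae_map_iff (by fun_prop) measurableSet_Icc).2
      (ae_of_all _ fun x => ⟨Int.fract_nonneg _, (Int.fract_lt_one _).le⟩)
  have hIcc : ∀ᵐ u ∂(volume.restrict (Icc (0 : ℝ) 1)), u ∈ Icc (0 : ℝ) 1 :=
    ae_restrict_mem measurableSet_Icc
  obtain ⟨C, hC⟩ := (isCompact_Icc (a := (0 : ℝ)) (b := 1)).exists_bound_of_continuousOn
    (f := fun u => g u - g 0) (by fun_prop)
  refine tendsto_of_forall_approx fun ε hε => ?_
  obtain ⟨k, hk⟩ : ∃ k : ℕ, C * (2 * k + 1 : ℝ)⁻¹ < ε := by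
    have : Tendsto (fun k : ℕ => C * (2 * k + 1 : ℝ)⁻¹) atTop (𝓝 (C * 0)) :=
      (tendsto_inv_atTop_zero.comp (tendsto_atTop_add_const_right _ 1
        (tendsto_natCast_atTop_atTop.const_mul_atTop two_pos))).const_mul C
    rw [mul_zero] at this
    exact (this.eventually (gt_mem_nhds hε)).exists
  set b : ℝ → ℝ := fun u => (2 * u - 1) ^ (2 * k)
  set h : ℝ → ℝ := fun u => g u + b u * (g 0 - g u)
  have hb : Continuous b := by fun_prop
  have hh : Continuous h := by fun_prop
  have hgh : ∀ u ∈ Icc (0 : ℝ) 1, |g u - h u| ≤ C * b u := fun u hu => by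
    have hb0 : 0 ≤ b u := (even_two_mul k).pow_nonneg _
    calc |g u - h u| = b u * |g u - g 0| := by
          rw [show g u - h u = b u * (g u - g 0) by ring, abs_mul, abs_of_nonneg hb0]
      _ ≤ C * b u := by rw [mul_comm]; exact mul_le_mul_of_nonneg_right (hC u hu) hb0
  have hmass : Tendsto (fun n : ℕ => ∫ u, b u ∂(μ.map fun x => Int.fract ((n : ℝ) * x))) atTop
      (𝓝 (2 * k + 1 : ℝ)⁻¹) := by
    simpa [b, ← integral_Icc_two_mul_sub_one_pow] using
      tendsto_integral_map_fract_mul_of_endpoints_eq hac hb (by norm_num [b])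
  refine ⟨_, _, tendsto_integral_map_fract_mul_of_endpoints_eq hac hh (by norm_num [h, b]),
    ?_, ?_⟩
  · rw [Real.dist_eq]
    refine (abs_integral_sub_integral_le_mul_integral isCompact_Icc hIcc hg hh hb hgh).trans ?_
    rw [integral_Icc_two_mul_sub_one_pow]
    exact hk.le
  · filter_upwards [(hmass.const_mul C).eventually (gt_mem_nhds hk)] with n hn
    exact (abs_integral_sub_integral_le_mul_integral isCompact_Icc (hfract n) hg hh hb hgh).trans
      hn.le

/-- Arbitrary functions principle: if `X` has a density, the fractional part of `n·X`
converges in distribution to the uniform law on `[0,1]`. -/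
theorem fract_nX_tendsto_uniform
    {Ω : Type*} [MeasurableSpace Ω] (P : Measure Ω) [IsProbabilityMeasure P]
    (X : Ω → ℝ) (hX : Measurable X) (hac : P.map X ≪ volume) :
    ∀ g : BoundedContinuousFunction ℝ ℝ,
      Tendsto (fun n : ℕ => ∫ ω, g (Int.fract ((n : ℝ) * X ω)) ∂P) atTop
        (nhds (∫ u in Set.Icc (0:ℝ) 1, g u)) := by
  intro g
  have : IsProbabilityMeasure (P.map X) := Measure.isProbabilityMeasure_map hX.aemeasurable
  have hlaw : ∀ n : ℕ, ∫ ω, g (Int.fract ((n : ℝ) * X ω)) ∂P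
      = ∫ u, g u ∂((P.map X).map fun x => Int.fract ((n : ℝ) * x)) := fun n => by
    rw [integral_map (by fun_prop) g.continuous.aestronglyMeasurable,
      integral_map (f := fun x => g (Int.fract ((n : ℝ) * x))) hX.aemeasurable
        (g.continuous.measurable.comp (by fun_prop)).aestronglyMeasurable]
  simpa only [hlaw] using tendsto_integral_map_fract_mul hac g.continuous
end

section
/- If X is a real random variable whose characteristic function φ_X(t) = E[exp(itX)] tends to 0 as |t| → ∞, then {nX} converges in distribution to the uniform distribution on [0,1] as n → ∞. -/
/-!
The law of `n X` read on the circle `ℝ / ℤ` has Fourier coefficients `φ_X (2π k n)`, which tend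
to `0` for `k ≠ 0`. On the compact circle every family of probability measures is tight and the
trigonometric polynomials form a point-separating star subalgebra, so this is enough for weak
convergence to Haar measure (Weyl's criterion). To come back to `[0, 1]` through `Int.fract`,
which is discontinuous at the integers, use the portmanteau theorem: for `G` open in `ℝ`, the
image `W` of `G ∩ (0, 1)` in the circle is open, has the measure of `G ∩ [0, 1]`, and
`Int.fract` maps every lift of a point of `W` into `G`.
-/

open MeasureTheory Filter Set Topology

namespace AddCircle

open Submodule BoundedContinuousFunction

variable {T : ℝ} [Fact (0 < T)]

theorem integral_fourier_haarAddCircle_of_ne_zero {k : ℤ} (hk : k ≠ 0) :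
    ∫ x, fourier k x ∂(haarAddCircle (T := T)) = 0 := by
  simpa [fourierCoeff, fourier_zero, Pi.single_apply, hk.symm] using
    congr_fun (fourierCoeff_fourier (T := T) k) 0

variable {ι : Type*} {l : Filter ι} {μ : ι → ProbabilityMeasure (AddCircle T)}

theorem tendsto_integral_of_mem_span_fourier
    (hμ : ∀ k : ℤ, k ≠ 0 →
      Tendsto (fun i ↦ ∫ x, fourier k x ∂(μ i : Measure (AddCircle T))) l (𝓝 0))
    {f : C(AddCircle T, ℂ)} (hf : f ∈ span ℂ (range fourier)) :
    Tendsto (fun i ↦ ∫ x, f x ∂(μ i : Measure (AddCircle T))) l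
      (𝓝 (∫ x, f x ∂haarAddCircle)) := by
  induction hf using span_induction with
  | mem _ hf =>
    obtain ⟨k, rfl⟩ := hf
    rcases eq_or_ne k 0 with rfl | hk
    · simpa using tendsto_const_nhds
    · rw [integral_fourier_haarAddCircle_of_ne_zero hk]
      exact hμ k hk
  | zero => simpa using tendsto_const_nhds
  | add f g _ _ hf hg =>
    have hadd (ν : Measure (AddCircle T)) [IsFiniteMeasure ν] :
        ∫ x, (f + g) x ∂ν = ∫ x, f x ∂ν + ∫ x, g x ∂ν :=
      integral_add ((mkOfCompact f).integrable ν) ((mkOfCompact g).integrable ν)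
    simpa only [hadd] using hf.add hg
  | smul c f _ hf => simpa [integral_const_mul] using hf.const_mul c

/-- Weyl's criterion. -/
theorem tendsto_haarAddCircle_of_tendsto_integral_fourier
    (hμ : ∀ k : ℤ, k ≠ 0 →
      Tendsto (fun i ↦ ∫ x, fourier k x ∂(μ i : Measure (AddCircle T))) l (𝓝 0)) :
    Tendsto μ l (𝓝 ⟨haarAddCircle, inferInstance⟩) := by
  refine ProbabilityMeasure.tendsto_of_tight_of_separatesPoints ℂ .of_compactSpace
    (A := fourierSubalgebra.comap (toContinuousMapStarₐ ℂ)) ?_ fun g hg ↦ ?_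
  · intro x y hxy
    obtain ⟨_, ⟨f, hf, rfl⟩, hfxy⟩ := fourierSubalgebra_separatesPoints hxy
    exact ⟨_, ⟨_, ⟨mkOfCompact f, hf, rfl⟩, rfl⟩, hfxy⟩
  · have hg_span : g.toContinuousMap ∈ span ℂ (range fourier) := by
      rw [← fourierSubalgebra_coe]
      exact hg
    exact tendsto_integral_of_mem_span_fourier hμ hg_span

end AddCircle

theorem UnitAddCircle.integral_fourier_map_coe (μ : Measure ℝ) (k : ℤ) :
    ∫ x, fourier k x ∂(μ.map ((↑) : ℝ → UnitAddCircle)) = charFun μ (2 * Real.pi * k) := by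
  rw [integral_map AddCircle.measurable_mk'.aemeasurable (by fun_prop), charFun_apply_real]
  congr 1 with x
  rw [fourier_coe_apply]
  push_cast
  ring_nf

theorem fract_mem_of_coe_mem_image_coe {S : Set ℝ} (hS : S ⊆ Ico 0 1) {x : ℝ}
    (hx : (x : UnitAddCircle) ∈ ((↑) : ℝ → UnitAddCircle) '' S) : Int.fract x ∈ S := by
  obtain ⟨y, hyS, hyx⟩ := hx
  rw [← AddCircle.coe_fract x] at hyx
  have hfract : Int.fract x ∈ Ico (0 : ℝ) (0 + 1) := by
    rw [zero_add]
    exact ⟨Int.fract_nonneg x, Int.fract_lt_one x⟩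
  rwa [(AddCircle.coe_eq_coe_iff_of_mem_Ico (by simpa using hS hyS) hfract).1 hyx] at hyS

instance isProbabilityMeasure_restrict_Icc_zero_one :
    IsProbabilityMeasure (volume.restrict (Icc (0 : ℝ) 1)) :=
  ⟨by simp⟩

theorem tendsto_map_fract_of_tendsto_map_coe {ι : Type*} {l : Filter ι}
    [l.IsCountablyGenerated] {μ : ι → ProbabilityMeasure ℝ}
    (h : Tendsto (fun i ↦ (μ i).map (f := ((↑) : ℝ → UnitAddCircle)) (by fun_prop)) l
      (𝓝 ⟨AddCircle.haarAddCircle, inferInstance⟩)) :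
    Tendsto (fun i ↦ (μ i).map (f := Int.fract) (by fun_prop)) l
      (𝓝 ⟨volume.restrict (Icc 0 1), inferInstance⟩) := by
  refine tendsto_of_forall_isOpen_le_liminf' fun G hG ↦ ?_
  set S := G ∩ Ioo 0 1
  set W := ((↑) : ℝ → UnitAddCircle) '' S
  have hW : IsOpen W := QuotientAddGroup.isOpenMap_coe S (hG.inter isOpen_Ioo)
  calc volume.restrict (Icc 0 1) G = volume S := by
        rw [← Measure.restrict_congr_set Ioo_ae_eq_Icc, Measure.restrict_apply hG.measurableSet]
    _ ≤ volume.restrict (Ioc 0 (0 + 1)) (((↑) : ℝ → UnitAddCircle) ⁻¹' W) := by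
        rw [Measure.restrict_apply' measurableSet_Ioc]
        exact measure_mono fun x hx ↦
          ⟨subset_preimage_image _ _ hx, Ioo_subset_Ioc_self (by simpa using hx.2)⟩
    _ = AddCircle.haarAddCircle W := by
        rw [(UnitAddCircle.measurePreserving_mk 0).measure_preimage
          hW.measurableSet.nullMeasurableSet, AddCircle.volume_eq_smul_haarAddCircle]
        simp
    _ ≤ liminf (fun i ↦
          ((μ i).map (f := ((↑) : ℝ → UnitAddCircle)) (by fun_prop)).toMeasure W) l :=
        ProbabilityMeasure.le_liminf_measure_open_of_tendsto h hW
    _ ≤ _ := by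
        refine liminf_le_liminf (.of_forall fun i ↦ ?_)
        simp only [ProbabilityMeasure.toMeasure_map]
        rw [Measure.map_apply (by fun_prop) hW.measurableSet,
          Measure.map_apply (by fun_prop) hG.measurableSet]
        exact measure_mono fun x hx ↦
          (fract_mem_of_coe_mem_image_coe (fun y hy ↦ Ioo_subset_Ico_self hy.2) hx).1

/-- If the characteristic function of `X` vanishes at infinity, then the fractional part
of `n·X` converges in distribution to the uniform law on `[0,1]`. -/
theorem fract_nX_tendsto_uniform_of_charFun
    {Ω : Type*} [MeasurableSpace Ω] (P : Measure Ω) [IsProbabilityMeasure P]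
    (X : Ω → ℝ) (hX : Measurable X)
    (hchar : Tendsto (fun t : ℝ => ∫ ω, Complex.exp (t * X ω * Complex.I) ∂P)
      (cocompact ℝ) (nhds 0)) :
    ∀ g : BoundedContinuousFunction ℝ ℝ,
      Tendsto (fun n : ℕ => ∫ ω, g (Int.fract ((n : ℝ) * X ω)) ∂P) atTop
        (nhds (∫ u in Set.Icc (0:ℝ) 1, g u)) := by
  intro g
  have hcharFun : Tendsto (charFun (P.map X)) (cocompact ℝ) (𝓝 0) := by
    refine hchar.congr fun t ↦ ?_
    rw [charFun_apply_real, integral_map hX.aemeasurable (by fun_prop)]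
  let law (n : ℕ) : ProbabilityMeasure ℝ :=
    ⟨P.map (fun ω ↦ n * X ω), Measure.isProbabilityMeasure_map (by fun_prop)⟩
  have hweyl : Tendsto (fun n ↦ (law n).map (f := ((↑) : ℝ → UnitAddCircle)) (by fun_prop))
      atTop (𝓝 ⟨AddCircle.haarAddCircle, inferInstance⟩) := by
    refine AddCircle.tendsto_haarAddCircle_of_tendsto_integral_fourier fun k hk ↦ ?_
    have hk' : 2 * Real.pi * k ≠ 0 := by simp [Real.pi_ne_zero, hk]
    refine (hcharFun.comp ((tendsto_cocompact_mul_right₀ hk').comp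
      (tendsto_natCast_atTop_atTop.mono_right atTop_le_cocompact))).congr fun n ↦ ?_
    rw [ProbabilityMeasure.toMeasure_map, UnitAddCircle.integral_fourier_map_coe]
    exact (charFun_map_mul_comp hX.aemeasurable _ _).symm
  refine (ProbabilityMeasure.tendsto_iff_forall_integral_tendsto.1
    (tendsto_map_fract_of_tendsto_map_coe hweyl) g).congr fun n ↦ ?_
  rw [ProbabilityMeasure.toMeasure_map, integral_map (by fun_prop) (by fun_prop)]
  exact integral_map (by fun_prop) (by fun_prop)
end

section
/- Let X have a density, let X_n = ⌊nX⌋/n, and let φ : ℝ → ℝ be C¹ and Lipschitz. Then n(φ(X_n) − φ(X)) converges in distribution to −U φ′(X), where U is uniform on [0,1] and independent of X. -/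
/-!
Since `Xₙ = X - {nX}/n`, a first-order expansion of `φ` gives
`n (φ(Xₙ) - φ(X)) = -{nX} φ'(X) + o(1)` pointwise, so by dominated convergence it suffices that
`E g(-{nX} φ'(X)) → E ∫₀¹ g(-u φ'(X)) du`. If `ρ` is the density of `X`, this is
`∫ ρ(x) G(x, {nx}) dx → ∫ ρ(x) ∫₀¹ G(x, u) du dx` for a bounded continuous `G`. Cutting `ℝ` into
the cells `[k/n, (k+1)/n)`, the left side equals exactly `∫ ∫₀¹ (ρ G)((⌊nx⌋ + u)/n, u) du dx`, which
converges to the right side by continuity when `ρ` is continuous with compact support; the general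
case follows by density of such `ρ` in `L¹`.
-/

open MeasureTheory Filter Topology Asymptotics Set Metric

theorem floor_mul_div_sub_self {n : ℕ} (hn : n ≠ 0) (x : ℝ) :
    (⌊n * x⌋ : ℝ) / n - x = -(Int.fract (n * x) / n) := by
  have : (n : ℝ) ≠ 0 := by exact_mod_cast hn
  rw [Int.fract]; field_simp; ring

theorem isBigO_floor_mul_div_sub_self (x : ℝ) :
    (fun n : ℕ => (⌊n * x⌋ : ℝ) / n - x) =O[atTop] fun n : ℕ => (n : ℝ)⁻¹ := by
  refine IsBigO.of_bound 1 ?_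
  filter_upwards [eventually_ne_atTop 0] with n hn
  rw [floor_mul_div_sub_self hn, norm_neg, one_mul, div_eq_mul_inv, norm_mul,
    Real.norm_of_nonneg (Int.fract_nonneg _)]
  exact mul_le_of_le_one_left (norm_nonneg _) (Int.fract_lt_one _).le

theorem tendsto_floor_mul_div (x : ℝ) :
    Tendsto (fun n : ℕ => (⌊n * x⌋ : ℝ) / n) atTop (𝓝 x) :=
  tendsto_sub_nhds_zero_iff.mp
    ((isBigO_floor_mul_div_sub_self x).trans_tendsto tendsto_inv_atTop_nhds_zero_nat)

theorem abs_floor_mul_add_div_sub_le {n : ℕ} (hn : n ≠ 0) (x : ℝ) {u : ℝ}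
    (hu : u ∈ Icc (0 : ℝ) 1) : |(⌊n * x⌋ + u) / n - x| ≤ 1 := by
  have hn' : (1 : ℝ) ≤ n := by exact_mod_cast Nat.one_le_iff_ne_zero.mpr hn
  have hx : (⌊n * x⌋ + u) / n - x = (u - Int.fract (n * x)) / n := by
    rw [Int.fract]; field_simp; ring
  rw [hx, abs_div, Nat.abs_cast, div_le_one (by linarith), abs_le]
  constructor <;> linarith [Int.fract_nonneg (n * x), Int.fract_lt_one (n * x), hu.1, hu.2]

-- `n • (φ (⌊nx⌋/n) - φ x - (⌊nx⌋/n - x) • φ')` is `o(n • n⁻¹) = o(1)`, as `⌊nx⌋/n - x = O(n⁻¹)`.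
theorem HasDerivAt.tendsto_smul_sub_floor_div {E : Type*} [NormedAddCommGroup E]
    [NormedSpace ℝ E] {φ : ℝ → E} {φ' : E} {x : ℝ} (h : HasDerivAt φ φ' x) :
    Tendsto (fun n : ℕ => (n : ℝ) • (φ ((⌊n * x⌋ : ℝ) / n) - φ x) + Int.fract (n * x) • φ')
      atTop (𝓝 0) := by
  have ho := (isBigO_refl (fun n : ℕ => (n : ℝ)) atTop).smul_isLittleO
    ((h.isLittleO.comp_tendsto (tendsto_floor_mul_div x)).trans_isBigO
      (isBigO_floor_mul_div_sub_self x))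
  refine (isLittleO_one_iff ℝ).mp (ho.congr' ?_ ?_)
  · filter_upwards [eventually_ne_atTop 0] with n hn
    have : (n : ℝ) ≠ 0 := by exact_mod_cast hn
    simp only [Function.comp_apply, smul_sub, smul_smul, floor_mul_div_sub_self hn]
    rw [mul_neg, mul_div_cancel₀ _ this, neg_smul, sub_neg_eq_add]
  · filter_upwards [eventually_ne_atTop 0] with n hn
    simp [hn]

theorem Continuous.tendsto_comp_sub_comp_of_isCompact {ι E F : Type*} [TopologicalSpace E]
    [AddCommGroup E] [IsTopologicalAddGroup E] [SeminormedAddCommGroup F] {g : E → F}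
    (hg : Continuous g) {K : Set E} (hK : IsCompact K) {l : Filter ι} {a b : ι → E}
    (hb : ∀ᶠ i in l, b i ∈ K) (hab : Tendsto (fun i => a i - b i) l (𝓝 0)) :
    Tendsto (fun i => g (a i) - g (b i)) l (𝓝 0) := by
  refine Metric.tendsto_nhds.mpr fun ε hε => ?_
  have hunif : ∀ᶠ d in 𝓝 (0 : E), ∀ y ∈ K, dist (g (d + y) - g y) 0 < ε := by
    refine hK.eventually_forall_of_forall_eventually fun y _ => ?_
    have hcont : Continuous fun z : E × E => dist (g (z.1 + z.2) - g z.2) 0 := by fun_prop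
    exact hcont.continuousAt.eventually_lt continuousAt_const (by simpa using hε)
  filter_upwards [hab.eventually hunif, hb] with i hi hbi
  simpa using hi (b i) hbi

theorem HasDerivAt.tendsto_comp_mul_sub_floor_div_sub_comp {F : Type*}
    [SeminormedAddCommGroup F] {φ : ℝ → ℝ} {φ' x : ℝ} (h : HasDerivAt φ φ' x) {g : ℝ → F}
    (hg : Continuous g) :
    Tendsto (fun n : ℕ => g (n * (φ ((⌊n * x⌋ : ℝ) / n) - φ x)) - g (-Int.fract (n * x) * φ'))
      atTop (𝓝 0) := by
  refine hg.tendsto_comp_sub_comp_of_isCompact (isCompact_Icc.image (continuous_neg.mul_const φ'))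
    (Eventually.of_forall fun n => ⟨_, ⟨Int.fract_nonneg _, (Int.fract_lt_one _).le⟩, rfl⟩) ?_
  simpa [sub_neg_eq_add, neg_mul] using h.tendsto_smul_sub_floor_div

theorem BoundedContinuousFunction.tendsto_integral_comp_sub_integral_comp {Ω α E : Type*}
    [MeasurableSpace Ω] {P : Measure Ω} [IsFiniteMeasure P] [TopologicalSpace α]
    [NormedAddCommGroup E] [NormedSpace ℝ E] (g : BoundedContinuousFunction α E) {A B : ℕ → Ω → α}
    (hA : ∀ n, AEStronglyMeasurable (A n) P) (hB : ∀ n, AEStronglyMeasurable (B n) P)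
    (hAB : ∀ᵐ ω ∂P, Tendsto (fun n => g (A n ω) - g (B n ω)) atTop (𝓝 0)) :
    Tendsto (fun n => ∫ ω, g (A n ω) ∂P - ∫ ω, g (B n ω) ∂P) atTop (𝓝 0) := by
  have hint : ∀ {C : Ω → α}, AEStronglyMeasurable C P → Integrable (fun ω => g (C ω)) P :=
    fun hC => .of_bound (g.continuous.comp_aestronglyMeasurable hC) ‖g‖
      (ae_of_all _ fun _ => g.norm_coe_le_norm _)
  have hdct := tendsto_integral_of_dominated_convergence
    (F := fun n ω => g (A n ω) - g (B n ω)) (fun _ => 2 * ‖g‖)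
    (fun n => ((hint (hA n)).sub (hint (hB n))).aestronglyMeasurable) (integrable_const _)
    (fun n => ae_of_all _ fun ω => (dist_eq_norm _ _).symm.trans_le (g.dist_le_two_norm _ _)) hAB
  simpa only [integral_sub (hint (hA _)) (hint (hB _)), integral_zero] using hdct

section FloorFract

variable {E : Type*} [NormedAddCommGroup E] [NormedSpace ℝ E]

-- Unfold both sides over the fundamental domain `(0, 1]` of `ℤ` acting on `ℝ`.
theorem integral_comp_floor_fract [CompleteSpace E] (Φ : ℤ → ℝ → E)
    (h₁ : Integrable fun y : ℝ => Φ ⌊y⌋ (Int.fract y))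
    (h₂ : Integrable fun y : ℝ => ∫ u in (0 : ℝ)..1, Φ ⌊y⌋ u) :
    ∫ y : ℝ, Φ ⌊y⌋ (Int.fract y) = ∫ y : ℝ, ∫ u in (0 : ℝ)..1, Φ ⌊y⌋ u := by
  have hD := isAddFundamentalDomain_Ioc zero_lt_one (0 : ℝ)
  rw [hD.integral_eq_tsum'' _ h₁, hD.integral_eq_tsum'' _ h₂]
  refine tsum_congr fun ⟨_, hm⟩ => ?_
  obtain ⟨m, rfl⟩ := AddSubgroup.mem_zmultiples_iff.mp hm
  have hcell : ∀ y ∈ Ioo (0 : ℝ) 1,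
      ⌊m • (1 : ℝ) + y⌋ = m ∧ Int.fract (m • (1 : ℝ) + y) = y := by
    intro y hy
    rw [zsmul_one, Int.floor_intCast_add, Int.fract_intCast_add,
      Int.fract_eq_self.mpr ⟨hy.1.le, hy.2⟩, Int.floor_eq_zero_iff.mpr ⟨hy.1.le, hy.2⟩, add_zero]
    exact ⟨rfl, rfl⟩
  simp only [zero_add, AddSubgroup.mk_vadd, vadd_eq_add]
  rw [integral_Ioc_eq_integral_Ioo, integral_Ioc_eq_integral_Ioo]
  calc ∫ y in Ioo 0 1, Φ ⌊m • (1 : ℝ) + y⌋ (Int.fract (m • (1 : ℝ) + y))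
      = ∫ y in Ioo 0 1, Φ m y :=
        setIntegral_congr_fun measurableSet_Ioo fun y hy => by rw [(hcell y hy).1, (hcell y hy).2]
    _ = ∫ _ in Ioo (0 : ℝ) 1, ∫ u in (0 : ℝ)..1, Φ m u := by
        rw [integral_const, intervalIntegral.integral_of_le zero_le_one,
          integral_Ioc_eq_integral_Ioo]
        simp
    _ = ∫ y in Ioo 0 1, ∫ u in (0 : ℝ)..1, Φ ⌊m • (1 : ℝ) + y⌋ u :=
        setIntegral_congr_fun measurableSet_Ioo fun y hy => by rw [(hcell y hy).1]

theorem integral_comp_fract_mul [CompleteSpace E] {Ψ : ℝ → ℝ → E} {c : ℝ} (hc : c ≠ 0)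
    (h₁ : Integrable fun x : ℝ => Ψ x (Int.fract (c * x)))
    (h₂ : Integrable fun x : ℝ => ∫ u in (0 : ℝ)..1, Ψ ((⌊c * x⌋ + u) / c) u) :
    ∫ x : ℝ, Ψ x (Int.fract (c * x)) = ∫ x : ℝ, ∫ u in (0 : ℝ)..1, Ψ ((⌊c * x⌋ + u) / c) u := by
  set Φ : ℤ → ℝ → E := fun k u => Ψ ((k + u) / c) u
  have hcell : ∀ x, Ψ x (Int.fract (c * x)) = Φ ⌊c * x⌋ (Int.fract (c * x)) := fun x => by
    simp only [Φ, Int.floor_add_fract, mul_div_cancel_left₀ _ hc]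
  simp_rw [hcell] at h₁ ⊢
  rw [Measure.integral_comp_mul_left (fun y => Φ ⌊y⌋ (Int.fract y)),
    Measure.integral_comp_mul_left (fun y => ∫ u in (0 : ℝ)..1, Φ ⌊y⌋ u),
    integral_comp_floor_fract Φ
      ((integrable_comp_mul_left_iff (fun y => Φ ⌊y⌋ (Int.fract y)) hc).1 h₁)
      ((integrable_comp_mul_left_iff (fun y => ∫ u in (0 : ℝ)..1, Φ ⌊y⌋ u) hc).1 h₂)]

theorem tendsto_intervalIntegral_comp_floor_mul_add_div {Ψ : ℝ → ℝ → E}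
    (hΨ : Continuous (Function.uncurry Ψ)) (x : ℝ) :
    Tendsto (fun n : ℕ => ∫ u in (0 : ℝ)..1, Ψ ((⌊n * x⌋ + u) / n) u) atTop
      (𝓝 (∫ u in (0 : ℝ)..1, Ψ x u)) := by
  have hΛ : Continuous fun p : ℝ × ℝ => ∫ u in (0 : ℝ)..1, Ψ (p.1 + u * p.2) u :=
    intervalIntegral.continuous_parametric_intervalIntegral_of_continuous'
      (f := fun (p : ℝ × ℝ) u => Ψ (p.1 + u * p.2) u)
      (show Continuous fun q : (ℝ × ℝ) × ℝ => Function.uncurry Ψ (q.1.1 + q.2 * q.1.2, q.2) from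
        hΨ.comp (by fun_prop)) 0 1
  have := hΛ.continuousAt.tendsto.comp
    ((tendsto_floor_mul_div x).prodMk_nhds tendsto_inv_atTop_nhds_zero_nat)
  simpa [Function.comp_def, add_mul, div_eq_mul_inv] using this

end FloorFract

theorem Continuous.continuous_intervalIntegral {E : Type*} [NormedAddCommGroup E]
    [NormedSpace ℝ E] {G : ℝ → ℝ → E} (hG : Continuous (Function.uncurry G)) (a b : ℝ) :
    Continuous fun x => ∫ u in a..b, G x u :=
  intervalIntegral.continuous_parametric_intervalIntegral_of_continuous' hG a b

theorem Continuous.measurable_comp_fract_mul {G : ℝ → ℝ → ℝ}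
    (hG : Continuous (Function.uncurry G)) (c : ℝ) :
    Measurable fun x : ℝ => G x (Int.fract (c * x)) :=
  hG.measurable.comp (measurable_id.prodMk (measurable_fract.comp (measurable_const_mul c)))

theorem norm_le_indicator_closedBall_of_dist_le {α E : Type*} [PseudoMetricSpace α]
    [SeminormedAddGroup E] {f : α → E} {c : α} {r B δ : ℝ} (hf : ∀ y ∉ closedBall c r, f y = 0)
    (hB : ∀ y, ‖f y‖ ≤ B) {x y : α} (hxy : dist y x ≤ δ) :
    ‖f y‖ ≤ (closedBall c (r + δ)).indicator (fun _ => B) x := by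
  by_cases hx : x ∈ closedBall c (r + δ)
  · rw [indicator_of_mem hx]
    exact hB y
  · rw [indicator_of_notMem hx, hf y fun hy => hx ?_, norm_zero]
    rw [mem_closedBall] at hy ⊢
    linarith [dist_triangle x y c, dist_comm x y]

theorem tendsto_integral_mul_comp_fract_of_hasCompactSupport {f : ℝ → ℝ} (hf : Continuous f)
    (hfs : HasCompactSupport f) {G : ℝ → ℝ → ℝ} (hG : Continuous (Function.uncurry G)) {C : ℝ}
    (hGC : ∀ x u, ‖G x u‖ ≤ C) :
    Tendsto (fun n : ℕ => ∫ x, f x * G x (Int.fract (n * x))) atTop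
      (𝓝 (∫ x, f x * ∫ u in (0 : ℝ)..1, G x u)) := by
  obtain ⟨r, hr⟩ := hfs.isCompact.isBounded.subset_closedBall 0
  obtain ⟨B, hB⟩ := hfs.exists_bound_of_continuous hf
  set Ψ : ℝ → ℝ → ℝ := fun y u => f y * G y u
  set F : ℕ → ℝ → ℝ := fun n x => ∫ u in (0 : ℝ)..1, Ψ ((⌊n * x⌋ + u) / n) u
  set bound : ℝ → ℝ := fun x => (closedBall 0 (r + 1)).indicator (fun _ => B) x * C
  have hbound : Integrable bound :=
    ((integrable_indicator_iff measurableSet_closedBall).mpr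
      (integrableOn_const measure_closedBall_lt_top.ne)).mul_const C
  have hF_meas : ∀ n, AEStronglyMeasurable (F n) := fun n =>
    ((measurable_of_countable fun k : ℤ => ∫ u in (0 : ℝ)..1, Ψ ((k + u) / n) u).comp
      (Int.measurable_floor.comp (measurable_const_mul _))).aestronglyMeasurable
  have hF_le : ∀ n, n ≠ 0 → ∀ x, ‖F n x‖ ≤ bound x := by
    intro n hn x
    have hpt : ∀ u ∈ uIoc (0 : ℝ) 1, ‖Ψ ((⌊n * x⌋ + u) / n) u‖ ≤ bound x := fun u hu => by
      rw [uIoc_of_le zero_le_one] at hu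
      rw [norm_mul]
      refine mul_le_mul (norm_le_indicator_closedBall_of_dist_le
        (fun y hy => image_eq_zero_of_notMem_tsupport fun h => hy (hr h)) hB
        (abs_floor_mul_add_div_sub_le hn x ⟨hu.1.le, hu.2⟩)) (hGC _ _) (norm_nonneg _)
        (indicator_nonneg (fun _ _ => (norm_nonneg _).trans (hB 0)) _)
    simpa using intervalIntegral.norm_integral_le_of_norm_le_const hpt
  have hF_eq : ∀ᶠ n : ℕ in atTop, ∫ x, F n x = ∫ x, f x * G x (Int.fract (n * x)) := by
    filter_upwards [eventually_ne_atTop 0] with n hn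
    refine (integral_comp_fract_mul (Ψ := Ψ) (Nat.cast_ne_zero.mpr hn)
      ((hf.integrable_of_hasCompactSupport hfs).mul_bdd
        (hG.measurable_comp_fract_mul _).aestronglyMeasurable (ae_of_all _ fun x => hGC _ _))
      (hbound.mono' (hF_meas n) (ae_of_all _ (hF_le n hn)))).symm
  simp_rw [← intervalIntegral.integral_const_mul]
  exact Tendsto.congr' hF_eq (tendsto_integral_filter_of_dominated_convergence bound
    (Eventually.of_forall hF_meas)
    ((eventually_ne_atTop 0).mono fun n hn => ae_of_all _ (hF_le n hn)) hbound
    (ae_of_all _ (tendsto_intervalIntegral_comp_floor_mul_add_div (Ψ := Ψ)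
      ((hf.comp continuous_fst).mul hG))))

theorem norm_integral_mul_sub_integral_mul_le {α 𝕜 : Type*} [MeasurableSpace α] [RCLike 𝕜]
    {μ : Measure α} {f₁ f₂ b : α → 𝕜} {C : ℝ} (hf₁ : Integrable f₁ μ) (hf₂ : Integrable f₂ μ)
    (hb : AEStronglyMeasurable b μ) (hbC : ∀ᵐ x ∂μ, ‖b x‖ ≤ C) :
    ‖∫ x, f₁ x * b x ∂μ - ∫ x, f₂ x * b x ∂μ‖ ≤ C * ∫ x, ‖f₁ x - f₂ x‖ ∂μ := by
  rw [← integral_sub (hf₁.mul_bdd hb hbC) (hf₂.mul_bdd hb hbC), ← integral_const_mul]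
  refine norm_integral_le_of_norm_le ((hf₁.sub hf₂).norm.const_mul C) ?_
  filter_upwards [hbC] with x hx
  rw [← sub_mul, norm_mul, mul_comm]
  exact mul_le_mul_of_nonneg_right hx (norm_nonneg _)

-- Both sides are `C`-Lipschitz in `f ∈ L¹`, so the compactly supported case extends by density.
theorem tendsto_integral_mul_comp_fract {f : ℝ → ℝ} (hf : Integrable f) {G : ℝ → ℝ → ℝ}
    (hG : Continuous (Function.uncurry G)) {C : ℝ} (hGC : ∀ x u, ‖G x u‖ ≤ C) :
    Tendsto (fun n : ℕ => ∫ x, f x * G x (Int.fract (n * x))) atTop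
      (𝓝 (∫ x, f x * ∫ u in (0 : ℝ)..1, G x u)) := by
  choose g hgs hgf hgc hgi using fun k : ℕ =>
    hf.exists_hasCompactSupport_integral_sub_le (Nat.one_div_pos_of_nat (n := k))
  have hsmall : Tendsto (fun k => C * ∫ x, ‖f x - g k x‖) atTop (𝓝 0) := by
    simpa using (squeeze_zero (fun k => integral_nonneg fun _ => norm_nonneg _) hgf
      tendsto_one_div_add_atTop_nhds_zero_nat).const_mul C
  have hHC : ∀ x, ‖∫ u in (0 : ℝ)..1, G x u‖ ≤ C := fun x => by
    simpa using intervalIntegral.norm_integral_le_of_norm_le_const (a := 0) (b := 1)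
      fun u _ => hGC x u
  refine TendstoUniformly.tendsto_of_eventually_tendsto (p := atTop)
    (F := fun k n : ℕ => ∫ x, g k x * G x (Int.fract (n * x)))
    (L := fun k => ∫ x, g k x * ∫ u in (0 : ℝ)..1, G x u) ?_
    (Eventually.of_forall fun k => tendsto_integral_mul_comp_fract_of_hasCompactSupport
      (hgc k) (hgs k) hG hGC) ?_
  · refine Metric.tendstoUniformly_iff.mpr fun ε hε => ?_
    filter_upwards [hsmall.eventually (gt_mem_nhds hε)] with k hk n
    rw [dist_eq_norm]
    exact (norm_integral_mul_sub_integral_mul_le hf (hgi k)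
      (hG.measurable_comp_fract_mul _).aestronglyMeasurable
      (ae_of_all _ fun x => hGC _ _)).trans_lt hk
  · refine tendsto_iff_norm_sub_tendsto_zero.mpr (squeeze_zero (fun _ => norm_nonneg _)
      (fun k => ?_) hsmall)
    rw [norm_sub_rev]
    exact norm_integral_mul_sub_integral_mul_le hf (hgi k)
      (hG.continuous_intervalIntegral 0 1).aestronglyMeasurable (ae_of_all _ hHC)

theorem integral_comp_eq_integral_toReal_rnDeriv_mul {Ω α : Type*} [MeasurableSpace Ω]
    [MeasurableSpace α] {P : Measure Ω} [IsFiniteMeasure P] {ν : Measure α} [SigmaFinite ν]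
    {X : Ω → α} (hX : AEMeasurable X P) (hac : P.map X ≪ ν) {h : α → ℝ}
    (hh : AEStronglyMeasurable h (P.map X)) :
    ∫ ω, h (X ω) ∂P = ∫ x, ((P.map X).rnDeriv ν x).toReal * h x ∂ν := by
  rw [integral_toReal_rnDeriv_mul hac, integral_map hX hh]

theorem tendsto_integral_comp_fract_mul_of_absolutelyContinuous {Ω : Type*} [MeasurableSpace Ω]
    {P : Measure Ω} [IsFiniteMeasure P] {X : Ω → ℝ} (hX : AEMeasurable X P)
    (hac : P.map X ≪ volume) {G : ℝ → ℝ → ℝ} (hG : Continuous (Function.uncurry G)) {C : ℝ}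
    (hGC : ∀ x u, ‖G x u‖ ≤ C) :
    Tendsto (fun n : ℕ => ∫ ω, G (X ω) (Int.fract (n * X ω)) ∂P) atTop
      (𝓝 (∫ ω, (∫ u in (0 : ℝ)..1, G (X ω) u) ∂P)) := by
  rw [integral_comp_eq_integral_toReal_rnDeriv_mul hX hac
    (hG.continuous_intervalIntegral 0 1).aestronglyMeasurable]
  refine (tendsto_integral_mul_comp_fract Measure.integrable_toReal_rnDeriv hG hGC).congr
    fun n => ?_
  exact (integral_comp_eq_integral_toReal_rnDeriv_mul (h := fun x => G x (Int.fract (n * x)))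
    hX hac (hG.measurable_comp_fract_mul _).aestronglyMeasurable).symm

theorem n_phi_diff_tendsto_general
    {Ω : Type*} [MeasurableSpace Ω] (P : Measure Ω) [IsProbabilityMeasure P]
    (X : Ω → ℝ) (hX : Measurable X) (hac : P.map X ≪ volume)
    (φ : ℝ → ℝ) (hφ : ContDiff ℝ 1 φ) :
    ∀ g : BoundedContinuousFunction ℝ ℝ,
      Tendsto
        (fun n : ℕ => ∫ ω, g ((n : ℝ) * (φ ((⌊(n : ℝ) * X ω⌋ : ℝ) / n) - φ (X ω))) ∂P)
        atTop
        (nhds (∫ ω, ∫ u in Set.Icc (0:ℝ) 1, g (-u * deriv φ (X ω)) ∂volume ∂P)) := by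
  intro g
  have hφ' : Continuous (deriv φ) := hφ.continuous_deriv le_rfl
  have hφm := hφ.continuous.measurable
  have hφ'm := hφ'.measurable
  have hfluct := g.tendsto_integral_comp_sub_integral_comp (P := P)
    (A := fun n ω => n * (φ ((⌊n * X ω⌋ : ℝ) / n) - φ (X ω)))
    (B := fun n ω => -Int.fract (n * X ω) * deriv φ (X ω))
    (fun n => (by measurability : Measurable _).aestronglyMeasurable)
    (fun n => (by measurability : Measurable _).aestronglyMeasurable)
    (ae_of_all _ fun ω => ((hφ.differentiable one_ne_zero).differentiableAt.hasDerivAt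
      (x := X ω)).tendsto_comp_mul_sub_floor_div_sub_comp g.continuous)
  have hfract : Tendsto (fun n : ℕ => ∫ ω, g (-Int.fract (n * X ω) * deriv φ (X ω)) ∂P) atTop
      (𝓝 (∫ ω, (∫ u in (0 : ℝ)..1, g (-u * deriv φ (X ω))) ∂P)) :=
    tendsto_integral_comp_fract_mul_of_absolutelyContinuous hX.aemeasurable hac
      (G := fun x u => g (-u * deriv φ x)) (by fun_prop) fun x u => g.norm_coe_le_norm _
  simp_rw [integral_Icc_eq_integral_Ioc, ← intervalIntegral.integral_of_le zero_le_one]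
  simpa only [sub_add_cancel, zero_add] using hfluct.add hfract

/-- For `X` with a density, `Xₙ = ⌊nX⌋/n` and `φ ∈ C¹ ∩ Lip`,
`n(φ(Xₙ) − φ(X))` converges in distribution to `−U φ'(X)` with `U` uniform on `[0,1]`
independent of `X`. -/
theorem n_phi_diff_tendsto
    {Ω : Type*} [MeasurableSpace Ω] (P : Measure Ω) [IsProbabilityMeasure P]
    (X : Ω → ℝ) (hX : Measurable X) (hac : P.map X ≪ volume)
    (φ : ℝ → ℝ) (hφ : ContDiff ℝ 1 φ) (K : NNReal) (hlip : LipschitzWith K φ) :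
    ∀ g : BoundedContinuousFunction ℝ ℝ,
      Tendsto
        (fun n : ℕ => ∫ ω, g ((n : ℝ) * (φ ((⌊(n : ℝ) * X ω⌋ : ℝ) / n) - φ (X ω))) ∂P)
        atTop
        (nhds (∫ ω, ∫ u in Set.Icc (0:ℝ) 1, g (-u * deriv φ (X ω)) ∂volume ∂P)) :=
  n_phi_diff_tendsto_general P X hX hac φ hφ
end

section
/- Let M : ℝ → O(d) be a bounded measurable map into the d×d orthogonal matrices, periodic with period 1, with ∫₀¹ M(s) ds = 0 (entrywise). Then for every ξ ∈ L²([0,1], ℝ^d), sup_{t ∈ [0,1]} |∫₀^t ξ(s)* M(ns) ds| → 0 as n → ∞. -/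
/-!
Since `M` has zero mean over a period, `∫ₐᵇ M(ns) ds = O(1/n)` uniformly in `a` and `b`.
For a continuous compactly supported `g`, cut `[0, t]` into pieces of length `δ` on which `g`
oscillates by at most `η`: freezing `g` on each piece costs `O(η)` in total and leaves
`O(1/(nδ))`. A general `ξ ∈ L²([0,1]) ⊆ L¹([0,1])` is approximated in `L¹` by such `g`, and
`ξ ↦ ∫₀ᵗ ξ(s)* M(ns) ds` is bounded on `L¹` uniformly in `n` and `t`.
-/

open MeasureTheory Filter Matrix Set Function intervalIntegral

theorem intervalIntegrable_of_norm_le {E : Type*} [NormedAddCommGroup E] {h : ℝ → E}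
    (hm : AEStronglyMeasurable h volume) {C : ℝ} (hC : ∀ x, ‖h x‖ ≤ C) (a b : ℝ) :
    IntervalIntegrable h volume a b :=
  (intervalIntegrable_const (c := C)).mono_fun hm.restrict
    (ae_of_all _ fun x => (hC x).trans (le_abs_self C))

theorem TendstoUniformlyOn.tendsto_iSup_norm {ι α E : Type*} [SeminormedAddCommGroup E]
    {l : Filter ι} {s : Set α} {F : ι → α → E} (h : TendstoUniformlyOn F 0 l s) :
    Tendsto (fun i => ⨆ x : s, ‖F i x‖) l (nhds 0) := by
  rw [Metric.tendsto_nhds]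
  intro ε hε
  filter_upwards [Metric.tendstoUniformlyOn_iff.1 h (ε / 2) (half_pos hε)] with i hi
  have hsup : ⨆ x : s, ‖F i x‖ ≤ ε / 2 :=
    Real.iSup_le (fun x => by simpa [dist_zero_left] using (hi x x.2).le) (half_pos hε).le
  rw [Real.dist_eq, sub_zero, abs_of_nonneg (Real.iSup_nonneg fun _ => norm_nonneg _)]
  exact hsup.trans_lt (half_lt_self hε)

theorem norm_intervalIntegral_le_of_short_subintervals {E : Type*} [NormedAddCommGroup E]
    [NormedSpace ℝ E] {h : ℝ → E} (hh : ∀ a b, IntervalIntegrable h volume a b)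
    {δ α β t : ℝ} {k : ℕ} (hδ : 0 ≤ δ) (ht : 0 ≤ t) (htk : t ≤ k * δ)
    (hpiece : ∀ a b, a ≤ b → b ≤ a + δ → ‖∫ x in a..b, h x‖ ≤ α + β * (b - a)) :
    ‖∫ x in 0..t, h x‖ ≤ k * α + β * t := by
  set x : ℕ → ℝ := fun p => min (p * δ) t
  have hx0 : x 0 = 0 := by simp [x, ht]
  have hxk : x k = t := min_eq_right htk
  have hpiece' (p : ℕ) : ‖∫ s in x p..x (p + 1), h s‖ ≤ α + β * (x (p + 1) - x p) := by
    refine hpiece _ _ (min_le_min_right _ (by gcongr; simp)) ?_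
    simp only [x, ← min_add_add_right, Nat.cast_succ, add_mul, one_mul]
    exact min_le_min_left _ (by linarith)
  calc ‖∫ s in 0..t, h s‖ = ‖∑ p ∈ Finset.range k, ∫ s in x p..x (p + 1), h s‖ := by
        rw [sum_integral_adjacent_intervals fun p _ => hh _ _, hx0, hxk]
    _ ≤ ∑ p ∈ Finset.range k, (α + β * (x (p + 1) - x p)) :=
        (norm_sum_le _ _).trans (Finset.sum_le_sum fun p _ => hpiece' p)
    _ = k * α + β * t := by
        rw [Finset.sum_add_distrib, ← Finset.mul_sum, Finset.sum_range_sub x, hx0, hxk]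
        simp

namespace Function.Periodic

variable {E : Type*} [NormedAddCommGroup E] [NormedSpace ℝ E] {f : ℝ → E} {T C : ℝ}

theorem norm_intervalIntegral_le_of_intervalIntegral_eq_zero (hf : Periodic f T) (hT : 0 < T)
    (hint : ∀ a b, IntervalIntegrable f volume a b) (hmean : ∫ x in 0..T, f x = 0)
    (hC : ∀ x, ‖f x‖ ≤ C) (a b : ℝ) :
    ‖∫ x in a..b, f x‖ ≤ C * T := by
  set m : ℤ := ⌊(b - a) / T⌋
  have hperiods : ∫ x in a..a + m • T, f x = 0 := by
    rw [hf.intervalIntegral_add_zsmul_eq m a hint, hf.intervalIntegral_add_eq a 0, zero_add,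
      hmean, smul_zero]
  have hrem : |b - (a + m • T)| ≤ T := by
    have h₁ : (m : ℝ) ≤ (b - a) / T := Int.floor_le _
    have h₂ : (b - a) / T < m + 1 := Int.lt_floor_add_one _
    rw [le_div_iff₀ hT] at h₁
    rw [div_lt_iff₀ hT] at h₂
    rw [zsmul_eq_mul, abs_le]
    constructor <;> nlinarith
  rw [← integral_add_adjacent_intervals (hint a _) (hint _ b), hperiods, zero_add]
  calc ‖∫ x in a + m • T..b, f x‖ ≤ C * |b - (a + m • T)| :=
        norm_integral_le_of_norm_le_const fun x _ => hC x
    _ ≤ C * T := mul_le_mul_of_nonneg_left hrem ((norm_nonneg _).trans (hC 0))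

theorem norm_intervalIntegral_comp_mul_le (hf : Periodic f T) (hT : 0 < T)
    (hint : ∀ a b, IntervalIntegrable f volume a b) (hmean : ∫ x in 0..T, f x = 0)
    (hC : ∀ x, ‖f x‖ ≤ C) {c : ℝ} (hc : 0 < c) (a b : ℝ) :
    ‖∫ x in a..b, f (c * x)‖ ≤ C * T / c := by
  rw [integral_comp_mul_left f hc.ne', norm_smul, norm_inv, Real.norm_of_nonneg hc.le,
    inv_mul_eq_div]
  exact div_le_div_of_nonneg_right
    (hf.norm_intervalIntegral_le_of_intervalIntegral_eq_zero hT hint hmean hC _ _) hc.le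

end Function.Periodic

section Bilinear

variable {E F G : Type*} [NormedAddCommGroup E] [NormedSpace ℝ E] [NormedAddCommGroup F]
  [NormedSpace ℝ F] [NormedAddCommGroup G] [NormedSpace ℝ G] (B : E →L[ℝ] F →L[ℝ] G)
  {f : ℝ → F} {T C : ℝ}

theorem norm_intervalIntegral_apply_le {u : ℝ → E} (hu : Integrable u) {w : ℝ → F}
    (hC : ∀ s, ‖w s‖ ≤ C) {a b : ℝ} (hab : a ≤ b) :
    ‖∫ s in a..b, B (u s) (w s)‖ ≤ ‖B‖ * C * ∫ s, ‖u s‖ := by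
  have hC0 : 0 ≤ C := (norm_nonneg _).trans (hC 0)
  calc ‖∫ s in a..b, B (u s) (w s)‖
      ≤ ∫ s in a..b, ‖B‖ * C * ‖u s‖ :=
        norm_integral_le_of_norm_le hab (ae_of_all _ fun s _ => by
          simpa only [mul_right_comm] using B.le_of_opNorm₂_le_of_le le_rfl le_rfl (hC s))
          (hu.norm.const_mul _).intervalIntegrable
    _ = ‖B‖ * C * ∫ s in Ioc a b, ‖u s‖ := by
        rw [integral_of_le hab, MeasureTheory.integral_const_mul]
    _ ≤ ‖B‖ * C * ∫ s, ‖u s‖ := mul_le_mul_of_nonneg_left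
        (setIntegral_le_integral hu.norm (ae_of_all _ fun s => norm_nonneg _)) (by positivity)

variable [CompleteSpace F] [CompleteSpace G]

theorem norm_intervalIntegral_apply_comp_mul_le (hfm : StronglyMeasurable f) (hf : Periodic f T)
    (hT : 0 < T) (hmean : ∫ x in 0..T, f x = 0) (hC : ∀ x, ‖f x‖ ≤ C) {g : ℝ → E}
    (hgm : AEStronglyMeasurable g volume) {K : ℝ} (hK : ∀ s, ‖g s‖ ≤ K) {c a b η : ℝ}
    (hc : 0 < c) (hab : a ≤ b) (hη : ∀ s ∈ Icc a b, ‖g s - g a‖ ≤ η) :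
    ‖∫ s in a..b, B (g s) (f (c * s))‖ ≤ ‖B‖ * K * (C * T / c) + ‖B‖ * η * C * (b - a) := by
  have hfcm : AEStronglyMeasurable (fun s => f (c * s)) volume :=
    (hfm.comp_measurable (measurable_const_mul c)).aestronglyMeasurable
  have hBint {v : ℝ → E} (hv : AEStronglyMeasurable v volume) {K' : ℝ} (hvK : ∀ s, ‖v s‖ ≤ K') :
      IntervalIntegrable (fun s => B (v s) (f (c * s))) volume a b :=
    intervalIntegrable_of_norm_le (B.aestronglyMeasurable_comp₂ hv hfcm)
      (fun s => B.le_of_opNorm₂_le_of_le le_rfl (hvK s) (hC _)) a b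
  have hsplit : ∫ s in a..b, B (g s) (f (c * s)) =
      B (g a) (∫ s in a..b, f (c * s)) + ∫ s in a..b, B (g s - g a) (f (c * s)) := by
    rw [← (B (g a)).intervalIntegral_comp_comm
        (intervalIntegrable_of_norm_le hfcm (fun s => hC _) a b),
      ← integral_add (hBint aestronglyMeasurable_const fun _ => le_rfl)
        (hBint (v := fun s => g s - g a) (hgm.sub aestronglyMeasurable_const)
          fun s => norm_sub_le_of_le (hK s) (hK a))]
    simp only [map_sub, _root_.sub_apply, add_sub_cancel]
  have hosc : ∀ s ∈ uIoc a b, ‖B (g s - g a) (f (c * s))‖ ≤ ‖B‖ * η * C := fun s hs =>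
    B.le_of_opNorm₂_le_of_le le_rfl (hη s (Ioc_subset_Icc_self ((uIoc_of_le hab) ▸ hs))) (hC _)
  rw [hsplit, ← abs_of_nonneg (sub_nonneg.2 hab)]
  exact norm_add_le_of_le
    (B.le_of_opNorm₂_le_of_le le_rfl (hK a) (hf.norm_intervalIntegral_comp_mul_le hT
      (intervalIntegrable_of_norm_le hfm.aestronglyMeasurable hC) hmean hC hc a b))
    (norm_integral_le_of_norm_le_const hosc)

theorem tendstoUniformlyOn_intervalIntegral_apply_comp_mul_of_continuous
    (hfm : StronglyMeasurable f) (hf : Periodic f T) (hT : 0 < T) (hmean : ∫ x in 0..T, f x = 0)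
    (hC : ∀ x, ‖f x‖ ≤ C) {g : ℝ → E} (hg : Continuous g) (hgc : HasCompactSupport g) (L : ℝ) :
    TendstoUniformlyOn (fun (n : ℕ) t => ∫ s in 0..t, B (g s) (f (n * s))) 0 atTop (Icc 0 L) := by
  rw [Metric.tendstoUniformlyOn_iff]
  intro ε hε
  have hC0 : 0 ≤ C := (norm_nonneg _).trans (hC 0)
  obtain ⟨K, hK⟩ := hgc.exists_bound_of_continuous hg
  obtain ⟨η, hη, hηε⟩ := exists_pos_mul_lt (half_pos hε) (‖B‖ * C * L)
  obtain ⟨δ, hδ, hgδ⟩ :=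
    Metric.uniformContinuous_iff.mp (hgc.uniformContinuous_of_continuous hg) η hη
  obtain ⟨k, hk⟩ := exists_nat_gt (2 * L / δ)
  have hsmall : Tendsto (fun n : ℕ => k * ‖B‖ * K * C * T / n) atTop (nhds 0) :=
    tendsto_const_div_atTop_nhds_zero_nat _
  filter_upwards [hsmall.eventually (gt_mem_nhds (half_pos hε)), eventually_gt_atTop 0]
    with n hn hn0 t ht
  rw [Pi.zero_apply, dist_zero_left]
  have hpiece (a b : ℝ) (hab : a ≤ b) (hbδ : b ≤ a + δ / 2) :
      ‖∫ s in a..b, B (g s) (f (n * s))‖ ≤ ‖B‖ * K * (C * T / n) + ‖B‖ * η * C * (b - a) :=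
    norm_intervalIntegral_apply_comp_mul_le B hfm hf hT hmean hC hg.aestronglyMeasurable hK
      (Nat.cast_pos.2 hn0) hab fun s hs => by
        rw [← dist_eq_norm]
        refine (hgδ ?_).le
        rw [Real.dist_eq, abs_of_nonneg (by linarith [hs.1])]
        linarith [hs.2]
  have htk : t ≤ k * (δ / 2) := by
    rw [div_lt_iff₀ hδ] at hk
    linarith [ht.2]
  calc ‖∫ s in 0..t, B (g s) (f (n * s))‖
      ≤ k * (‖B‖ * K * (C * T / n)) + ‖B‖ * η * C * t :=
        norm_intervalIntegral_le_of_short_subintervals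
          (intervalIntegrable_of_norm_le
            (B.aestronglyMeasurable_comp₂ hg.aestronglyMeasurable
              (hfm.comp_measurable (measurable_const_mul _)).aestronglyMeasurable)
            fun s => B.le_of_opNorm₂_le_of_le le_rfl (hK s) (hC _))
          (half_pos hδ).le ht.1 htk hpiece
    _ = k * ‖B‖ * K * C * T / n + ‖B‖ * C * t * η := by ring
    _ ≤ k * ‖B‖ * K * C * T / n + ‖B‖ * C * L * η := by gcongr; exact ht.2
    _ < ε / 2 + ε / 2 := add_lt_add hn hηε
    _ = ε := add_halves ε

theorem tendstoUniformlyOn_intervalIntegral_apply_comp_mul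
    (hfm : StronglyMeasurable f) (hf : Periodic f T) (hT : 0 < T) (hmean : ∫ x in 0..T, f x = 0)
    (hC : ∀ x, ‖f x‖ ≤ C) {L : ℝ} {φ : ℝ → E} (hφ : IntegrableOn φ (Icc 0 L)) :
    TendstoUniformlyOn (fun (n : ℕ) t => ∫ s in 0..t, B (φ s) (f (n * s))) 0 atTop (Icc 0 L) := by
  rw [Metric.tendstoUniformlyOn_iff]
  intro ε hε
  have hC0 : 0 ≤ C := (norm_nonneg _).trans (hC 0)
  obtain ⟨η, hη, hηε⟩ := exists_pos_mul_lt (half_pos hε) (‖B‖ * C)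
  set ψ := (Icc 0 L).indicator φ
  have hψ : Integrable ψ := (integrable_indicator_iff measurableSet_Icc).2 hφ
  obtain ⟨g, hgc, hψg, hg, hgi⟩ := hψ.exists_hasCompactSupport_integral_sub_le hη
  filter_upwards [Metric.tendstoUniformlyOn_iff.1
    (tendstoUniformlyOn_intervalIntegral_apply_comp_mul_of_continuous B hfm hf hT hmean hC hg hgc L)
    (ε / 2) (half_pos hε)] with n hn t ht
  have hgn := hn t ht
  rw [Pi.zero_apply, dist_zero_left] at hgn ⊢
  have hw : AEStronglyMeasurable (fun s => f (n * s)) volume :=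
    (hfm.comp_measurable (measurable_const_mul _)).aestronglyMeasurable
  have hBint {v : ℝ → E} (hv : Integrable v) :
      IntervalIntegrable (fun s => B (v s) (f (n * s))) volume 0 t :=
    (B.integrable_of_bilin_of_bdd_right C hv hw (ae_of_all _ fun s => hC _)).intervalIntegrable
  have hsplit : ∫ s in 0..t, B (φ s) (f (n * s)) =
      (∫ s in 0..t, B (ψ s - g s) (f (n * s))) + ∫ s in 0..t, B (g s) (f (n * s)) := by
    rw [← integral_add (hBint (v := fun s => ψ s - g s) (hψ.sub hgi)) (hBint hgi)]
    refine integral_congr fun s hs => ?_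
    have hsL : s ∈ Icc 0 L := Icc_subset_Icc le_rfl ht.2 ((uIcc_of_le ht.1) ▸ hs)
    simp only [ψ, indicator_of_mem hsL, map_sub, _root_.sub_apply, sub_add_cancel]
  have happrox := norm_intervalIntegral_apply_le B (hψ.sub hgi) (fun s => hC (n * s)) ht.1
  calc ‖∫ s in 0..t, B (φ s) (f (n * s))‖
      ≤ ‖∫ s in 0..t, B (ψ s - g s) (f (n * s))‖ + ‖∫ s in 0..t, B (g s) (f (n * s))‖ := by
        rw [hsplit]
        exact norm_add_le _ _
    _ < ε / 2 + ε / 2 :=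
        add_lt_add_of_le_of_lt
          (happrox.trans ((mul_le_mul_of_nonneg_left hψg (by positivity)).trans hηε.le)) hgn
    _ = ε := add_halves ε

end Bilinear

noncomputable def Matrix.vecMulL (m n : Type*) [Fintype m] [Fintype n] :
    (m → ℝ) →L[ℝ] (m → n → ℝ) →L[ℝ] (n → ℝ) :=
  LinearMap.toContinuousLinearMap <| LinearMap.toContinuousLinearMap.toLinearMap ∘ₗ
    LinearMap.mk₂ ℝ (fun v A => v ᵥ* A) (fun _ _ _ => add_vecMul _ _ _)
      (fun _ _ _ => smul_vecMul _ _ _) (fun _ _ _ => vecMul_add _ _ _)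
      (fun _ _ _ => vecMul_smul _ _ _)

/-- For a bounded measurable 1-periodic orthogonal-matrix valued map `M` with zero mean
over a period and `ξ ∈ L²([0,1], ℝ^d)`, `sup_{t∈[0,1]} |∫₀^t ξ(s)* M(ns) ds| → 0`. -/
theorem sup_integral_periodic_orthogonal_tendsto_zero
    {d : ℕ} (M : ℝ → Matrix (Fin d) (Fin d) ℝ) (hMmeas : ∀ i j, Measurable fun s => M s i j)
    (hOrth : ∀ s, M s ∈ Matrix.orthogonalGroup (Fin d) ℝ)
    (hper : Function.Periodic M 1)
    (hmean : ∀ i j, ∫ s in Set.Icc (0:ℝ) 1, M s i j = 0)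
    (ξ : ℝ → (Fin d → ℝ)) (hξ : MeasureTheory.MemLp ξ 2 (volume.restrict (Set.Icc (0:ℝ) 1))) :
    Tendsto
      (fun n : ℕ => ⨆ t : Set.Icc (0:ℝ) 1,
        ‖∫ s in Set.Icc (0:ℝ) (t : ℝ), Matrix.vecMul (ξ s) (M ((n : ℝ) * s))‖)
      atTop (nhds 0) := by
  let f : ℝ → Fin d → Fin d → ℝ := M
  have hfm : StronglyMeasurable f :=
    (measurable_pi_iff.2 fun i => measurable_pi_iff.2 (hMmeas i)).stronglyMeasurable
  have hfC (s : ℝ) : ‖f s‖ ≤ 1 :=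
    (pi_norm_le_iff_of_nonneg zero_le_one).2 fun i => (pi_norm_le_iff_of_nonneg zero_le_one).2
      fun j => entry_norm_bound_of_unitary (hOrth s) i j
  have hfint : IntegrableOn f (Ioc 0 1) :=
    Integrable.of_bound hfm.aestronglyMeasurable 1 (ae_of_all _ hfC)
  have hfmean : ∫ s in 0..1, f s = 0 := by
    ext i j
    rw [integral_of_le zero_le_one, eval_integral hfint.eval, eval_integral (hfint.eval i).eval,
      ← integral_Icc_eq_integral_Ioc]
    exact hmean i j
  refine ((tendstoUniformlyOn_intervalIntegral_apply_comp_mul (Matrix.vecMulL (Fin d) (Fin d))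
    hfm hper one_pos hfmean hfC (hξ.integrable one_le_two)).tendsto_iSup_norm).congr fun n => ?_
  congr! 2 with t
  rw [integral_of_le t.2.1, integral_Icc_eq_integral_Ioc]
  rfl
end

section
/- Let θ be bounded measurable 1-periodic with mean 0 and mean square 1. For every f ∈ L¹([0,1]) and every continuous bounded g : ℝ → ℝ, ∫₀¹ f(s) g(θ(ns)) ds → ∫₀¹ f(s) ds · ∫₀¹ g(θ(u)) du as n → ∞. -/
open MeasureTheory Filter Topology

/-! Let `m` be the mean of `G = g ∘ θ` over a period; it suffices that `∫₀¹ f(s) h(ns) ds → 0`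
for the centred function `h = G - m`. These functionals of `f` are bounded on `L¹` uniformly in
`n` (by `sup |h|`), so it is enough to treat bounded continuous `f`, which are dense. For those,
replace `f(s)` by its value at the right endpoint of the cell `(j/n, (j+1)/n]` containing `s`:
the resulting integral vanishes exactly, since `h(n·)` has integral zero over every cell, and the
error tends to zero by dominated convergence. -/

theorem Function.Periodic.intervalIntegral_natCeil_mul_eq_zero {h : ℝ → ℝ}
    (hper : Function.Periodic h 1) (hint : IntervalIntegrable h volume 0 1)
    (hmean : ∫ x in (0 : ℝ)..1, h x = 0) (c : ℕ → ℝ) (N : ℕ) :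
    ∫ x in (0 : ℝ)..N, c ⌈x⌉₊ * h x = 0 := by
  have hcell : ∀ j : ℕ, Set.EqOn (fun x => c ⌈x⌉₊ * h x) (fun x => c (j + 1) * h x)
      (Set.uIoc (j : ℝ) (j + 1 : ℕ)) := by
    intro j x hx
    rw [Set.uIoc_of_le (by simp), Nat.cast_succ] at hx
    have hj : ⌈x⌉₊ = j + 1 := by
      rw [Nat.ceil_eq_iff (Nat.succ_ne_zero j)]
      push_cast
      simpa using hx
    simp only [hj]
  have hunit : ∀ j : ℕ, ∫ x in (j : ℝ)..(j + 1 : ℕ), h x = 0 := by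
    intro j
    rw [Nat.cast_succ, hper.intervalIntegral_add_eq (j : ℝ) 0, zero_add, hmean]
  have hsum := intervalIntegral.sum_integral_adjacent_intervals (a := fun j : ℕ => (j : ℝ))
    (n := N) fun j _ =>
      (((hper.intervalIntegrable₀ one_ne_zero hint) _ _).const_mul (c (j + 1))).congr
        (hcell j).symm
  rw [Nat.cast_zero] at hsum
  rw [← hsum]
  refine Finset.sum_eq_zero fun j _ => ?_
  rw [intervalIntegral.integral_congr_ae (ae_of_all _ (hcell j)),
    intervalIntegral.integral_const_mul, hunit, mul_zero]

theorem Function.Periodic.tendsto_setIntegral_mul_comp_mul_of_integral_eq_zero {h : ℝ → ℝ}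
    {C : ℝ} (hm : Measurable h) (hb : ∀ x, ‖h x‖ ≤ C) (hper : Function.Periodic h 1)
    (hmean : ∫ x in (0 : ℝ)..1, h x = 0) (φ : BoundedContinuousFunction ℝ ℝ) :
    Tendsto (fun n : ℕ => ∫ s in Set.Icc (0 : ℝ) 1, φ s * h (n * s)) atTop (𝓝 0) := by
  set ψ : ℕ → ℝ → ℝ := fun n s => φ (⌈n * s⌉₊ / n)
  have hψm : ∀ n, Measurable (ψ n) := fun n =>
    φ.continuous.measurable.comp
      ((measurable_from_nat.comp (Nat.measurable_ceil.comp (measurable_const_mul _))).div_const _)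
  have hψ : ∀ s ∈ Set.Icc (0 : ℝ) 1, Tendsto (fun n : ℕ => ψ n s) atTop (𝓝 (φ s)) :=
    fun s hs => by
      have hlim := (tendsto_nat_ceil_mul_div_atTop hs.1).comp tendsto_natCast_atTop_atTop
      simp only [Function.comp_def, mul_comm s] at hlim
      exact (φ.continuous.tendsto s).comp hlim
  have hhn : ∀ n : ℕ, Measurable fun s : ℝ => h (n * s) := fun n =>
    hm.comp (measurable_const_mul _)
  have hint : ∀ (n : ℕ) (F : ℝ → ℝ), Measurable F → (∀ x, ‖F x‖ ≤ ‖φ‖) →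
      IntegrableOn (fun s => F s * h (n * s)) (Set.Icc 0 1) :=
    fun n F hF hFb => Measure.integrableOn_of_bounded measure_Icc_lt_top.ne
      (hF.mul (hhn n)).aestronglyMeasurable (M := ‖φ‖ * C)
      (ae_of_all _ fun x => by rw [norm_mul]; gcongr; exacts [hFb x, hb _])
  have hstep : ∀ n : ℕ, 0 < n → ∫ s in Set.Icc (0 : ℝ) 1, ψ n s * h (n * s) = 0 := by
    intro n hn
    rw [integral_Icc_eq_integral_Ioc, ← intervalIntegral.integral_of_le zero_le_one,
      intervalIntegral.integral_comp_mul_left (fun u => φ (⌈u⌉₊ / n) * h u) (by positivity),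
      mul_zero, mul_one, hper.intervalIntegral_natCeil_mul_eq_zero
        (intervalIntegrable_const.mono_fun' hm.aestronglyMeasurable (ae_of_all _ hb)) hmean
        (fun k => φ (k / n)), smul_zero]
  have hdiff : ∀ n : ℕ, 0 < n → ∫ s in Set.Icc (0 : ℝ) 1, φ s * h (n * s) =
      ∫ s in Set.Icc (0 : ℝ) 1, (φ s - ψ n s) * h (n * s) := by
    intro n hn
    simp_rw [sub_mul]
    rw [integral_sub (hint n φ φ.continuous.measurable φ.norm_coe_le_norm)
      (hint n (ψ n) (hψm n) fun _ => φ.norm_coe_le_norm _), hstep n hn, sub_zero]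
  have hbound : ∀ (n : ℕ) (s : ℝ), ‖(φ s - ψ n s) * h (n * s)‖ ≤ 2 * ‖φ‖ * C := fun n s => by
    rw [norm_mul, ← dist_eq_norm]
    exact mul_le_mul (φ.dist_le_two_norm _ _) (hb _) (norm_nonneg _) (by positivity)
  have hpointwise : ∀ s ∈ Set.Icc (0 : ℝ) 1,
      Tendsto (fun n : ℕ => (φ s - ψ n s) * h (n * s)) atTop (𝓝 0) := fun s hs => by
    have hsmall : Tendsto (fun n : ℕ => ‖φ s - ψ n s‖ * C) atTop (𝓝 0) := by
      simpa using ((tendsto_const_nhds (x := φ s)).sub (hψ s hs)).norm.mul_const C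
    exact squeeze_zero_norm (fun n => by rw [norm_mul]; gcongr; exact hb _) hsmall
  have hlim := tendsto_integral_of_dominated_convergence (μ := volume.restrict (Set.Icc 0 1))
    (f := fun _ => (0 : ℝ)) (fun _ => 2 * ‖φ‖ * C)
    (fun n => ((φ.continuous.measurable.sub (hψm n)).mul (hhn n)).aestronglyMeasurable)
    (integrable_const _) (fun n => ae_of_all _ (hbound n))
    (ae_restrict_of_forall_mem measurableSet_Icc hpointwise)
  rw [integral_zero] at hlim
  exact hlim.congr' ((eventually_gt_atTop 0).mono fun n hn => (hdiff n hn).symm)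

theorem tendsto_integral_mul_of_forall_boundedContinuous {α ι : Type*} [TopologicalSpace α]
    [NormalSpace α] [MeasurableSpace α] [BorelSpace α] {μ : Measure α} [μ.WeaklyRegular]
    {l : Filter ι} {k : ι → α → ℝ} {C : ℝ} (hkm : ∀ i, AEStronglyMeasurable (k i) μ)
    (hkb : ∀ i, ∀ᵐ x ∂μ, ‖k i x‖ ≤ C)
    (hk : ∀ φ : BoundedContinuousFunction α ℝ, Tendsto (fun i => ∫ x, φ x * k i x ∂μ) l (𝓝 0))
    {f : α → ℝ} (hf : Integrable f μ) :
    Tendsto (fun i => ∫ x, f x * k i x ∂μ) l (𝓝 0) := by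
  obtain ⟨D, hD, hkD⟩ : ∃ D, 0 ≤ D ∧ ∀ i, ∀ᵐ x ∂μ, ‖k i x‖ ≤ D :=
    ⟨max C 0, le_max_right _ _, fun i => (hkb i).mono fun _ hx => hx.trans (le_max_left _ _)⟩
  rw [Metric.tendsto_nhds]
  intro ε hε
  obtain ⟨δ, hδ, hDδ⟩ := exists_pos_mul_lt (half_pos hε) D
  obtain ⟨φ, hfφ, hφ⟩ := hf.exists_boundedContinuous_integral_sub_le hδ
  filter_upwards [Metric.tendsto_nhds.mp (hk φ) _ (half_pos hε)] with i hi
  have happrox : ‖∫ x, f x * k i x ∂μ - ∫ x, φ x * k i x ∂μ‖ ≤ D * δ :=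
    calc ‖∫ x, f x * k i x ∂μ - ∫ x, φ x * k i x ∂μ‖
        = ‖∫ x, (f x - φ x) * k i x ∂μ‖ := by
          simp_rw [sub_mul]
          rw [integral_sub (hf.mul_bdd (hkm i) (hkD i)) (hφ.mul_bdd (hkm i) (hkD i))]
      _ ≤ ∫ x, D * ‖f x - φ x‖ ∂μ :=
          norm_integral_le_of_norm_le ((hf.sub hφ).norm.const_mul D)
            ((hkD i).mono fun x hx => by rw [norm_mul, mul_comm]; gcongr)
      _ ≤ D * δ := by rw [integral_const_mul]; gcongr
  rw [dist_zero_right] at hi ⊢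
  calc ‖∫ x, f x * k i x ∂μ‖
      ≤ ‖∫ x, f x * k i x ∂μ - ∫ x, φ x * k i x ∂μ‖ + ‖∫ x, φ x * k i x ∂μ‖ :=
        norm_le_norm_sub_add _ _
    _ < ε := by linarith

theorem Function.Periodic.tendsto_setIntegral_mul_comp_mul {G : ℝ → ℝ} {C : ℝ}
    (hm : Measurable G) (hb : ∀ x, ‖G x‖ ≤ C) (hper : Function.Periodic G 1) {f : ℝ → ℝ}
    (hf : IntegrableOn f (Set.Icc 0 1)) :
    Tendsto (fun n : ℕ => ∫ s in Set.Icc (0 : ℝ) 1, f s * G (n * s)) atTop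
      (𝓝 ((∫ s in Set.Icc (0 : ℝ) 1, f s) * ∫ u in Set.Icc (0 : ℝ) 1, G u)) := by
  set m := ∫ u in Set.Icc (0 : ℝ) 1, G u
  set h : ℝ → ℝ := fun u => G u - m
  have hhm : Measurable h := hm.sub_const m
  have hhb : ∀ x, ‖h x‖ ≤ C + ‖m‖ := fun x => (norm_sub_le _ _).trans (by gcongr; exact hb x)
  have hhn : ∀ n : ℕ, Measurable fun s : ℝ => h (n * s) := fun n =>
    hhm.comp (measurable_const_mul _)
  have hhper : Function.Periodic h 1 := fun x => by simp only [h, hper x]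
  have hhmean : ∫ x in (0 : ℝ)..1, h x = 0 := by
    have hGint : IntervalIntegrable G volume 0 1 :=
      intervalIntegrable_const.mono_fun' hm.aestronglyMeasurable (ae_of_all _ hb)
    rw [intervalIntegral.integral_sub hGint intervalIntegrable_const,
      intervalIntegral.integral_of_le zero_le_one, ← integral_Icc_eq_integral_Ioc]
    simp [m]
  have hcentered : Tendsto (fun n : ℕ => ∫ s in Set.Icc (0 : ℝ) 1, f s * h (n * s)) atTop (𝓝 0) :=
    tendsto_integral_mul_of_forall_boundedContinuous (fun n => (hhn n).aestronglyMeasurable)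
      (fun n => ae_of_all _ fun s => hhb _)
      (hhper.tendsto_setIntegral_mul_comp_mul_of_integral_eq_zero hhm hhb hhmean) hf
  have hsplit : ∀ n : ℕ, ∫ s in Set.Icc (0 : ℝ) 1, f s * G (n * s) =
      (∫ s in Set.Icc (0 : ℝ) 1, f s * h (n * s)) + (∫ s in Set.Icc (0 : ℝ) 1, f s) * m := by
    intro n
    rw [← integral_mul_const, ← integral_add
      (hf.mul_bdd (hhn n).aestronglyMeasurable (ae_of_all _ fun s => hhb _)) (hf.mul_const m)]
    simp only [h]
    congr 1 with s
    ring
  simpa [hsplit] using hcentered.add_const ((∫ s in Set.Icc (0 : ℝ) 1, f s) * m)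

theorem integral_decoupling_periodic_general
    (θ : ℝ → ℝ) (hθm : Measurable θ)
    (hper : Function.Periodic θ 1)
    (f : ℝ → ℝ) (hf : IntegrableOn f (Set.Icc (0:ℝ) 1) volume)
    (g : BoundedContinuousFunction ℝ ℝ) :
    Tendsto (fun n : ℕ => ∫ s in Set.Icc (0:ℝ) 1, f s * g (θ ((n : ℝ) * s))) atTop
      (nhds ((∫ s in Set.Icc (0:ℝ) 1, f s) * ∫ u in Set.Icc (0:ℝ) 1, g (θ u))) :=
  (hper.comp g).tendsto_setIntegral_mul_comp_mul (g.continuous.measurable.comp hθm)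
    (fun u => g.norm_coe_le_norm (θ u)) hf

/-- Asymptotic decoupling: for `θ` bounded measurable 1-periodic (mean 0, mean square 1),
`f ∈ L¹([0,1])` and `g` continuous bounded,
`∫₀¹ f(s) g(θ(ns)) ds → (∫₀¹ f) · (∫₀¹ g(θ(u)) du)`. -/
theorem integral_decoupling_periodic
    (θ : ℝ → ℝ) (hθm : Measurable θ) (C : ℝ) (hθb : ∀ s, |θ s| ≤ C)
    (hper : Function.Periodic θ 1)
    (hmean : ∫ s in Set.Icc (0:ℝ) 1, θ s = 0)
    (hmsq : ∫ s in Set.Icc (0:ℝ) 1, (θ s)^2 = 1)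
    (f : ℝ → ℝ) (hf : IntegrableOn f (Set.Icc (0:ℝ) 1) volume)
    (g : BoundedContinuousFunction ℝ ℝ) :
    Tendsto (fun n : ℕ => ∫ s in Set.Icc (0:ℝ) 1, f s * g (θ ((n : ℝ) * s))) atTop
      (nhds ((∫ s in Set.Icc (0:ℝ) 1, f s) * ∫ u in Set.Icc (0:ℝ) 1, g (θ u))) :=
  integral_decoupling_periodic_general θ hθm hper f hf g
end

section
/- Let X have a density and X_n = ⌊nX⌋/n. Then n(X − X_n) = {nX} converges in distribution to Uniform[0,1], and in particular X_n → X almost surely with |X − X_n| ≤ 1/n. -/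
/-!
The first two claims follow from `x - ⌊n x⌋ / n = {n x} / n`. For the third, write the law of `X`
as `ρ(x) dx` with `ρ ∈ L¹` and put `h = g ∘ fract - ∫₀¹ g`, a bounded `1`-periodic function of
mean zero; it suffices that `∫ h(c x) ρ(x) dx → 0` as `c → ∞`. The average of the shifted
integrals `∫ h(c x - t) ρ(x) dx` over `t ∈ [0, 1]` vanishes by Fubini and periodicity, while each
shift moves the integral by at most `sup |h| · ‖ρ(· + t / c) - ρ‖₁`, which is small for large `c`
by continuity of translation in `L¹`.
-/

open MeasureTheory Filter Topology

theorem Function.Periodic.intervalIntegral_comp_sub {h : ℝ → ℝ} {T : ℝ}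
    (hper : Function.Periodic h T) (a : ℝ) :
    ∫ t in (0:ℝ)..T, h (a - t) = ∫ t in (0:ℝ)..T, h t := by
  simpa [intervalIntegral.integral_comp_sub_left] using hper.intervalIntegral_add_eq (a - T) 0

theorem MeasureTheory.Integrable.tendsto_integral_abs_comp_add_right_sub {f : ℝ → ℝ}
    (hf : Integrable f volume) :
    Tendsto (fun s => ∫ x, |f (x + s) - f x|) (𝓝 0) (𝓝 0) := by
  let shift : C(ℝ, C(ℝ, ℝ)) := (ContinuousMap.mk (fun p : ℝ × ℝ => p.2 + p.1) (by fun_prop)).curry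
  have hshift : ∀ s, MeasurePreserving (shift s) volume volume := fun s =>
    measurePreserving_add_right volume s
  let τ : ℝ → Lp ℝ 1 volume := fun s => Lp.compMeasurePreserving (shift s) (hshift s) (hf.toL1 f)
  have hτ : Tendsto τ (𝓝 0) (𝓝 (τ 0)) := tendsto_const_nhds.compMeasurePreservingLp
    (shift.continuous.tendsto 0) hshift (hshift 0) ENNReal.one_ne_top
  have hdist : ∀ s, dist (τ s) (τ 0) = ∫ x, |f (x + s) - f x| := by
    intro s
    rw [dist_eq_norm, L1.norm_eq_integral_norm]
    refine integral_congr_ae ?_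
    filter_upwards [Lp.coeFn_sub (τ s) (τ 0),
      Lp.coeFn_compMeasurePreserving (hf.toL1 f) (hshift s),
      Lp.coeFn_compMeasurePreserving (hf.toL1 f) (hshift 0),
      (hshift s).quasiMeasurePreserving.ae_eq_comp hf.coeFn_toL1,
      (hshift 0).quasiMeasurePreserving.ae_eq_comp hf.coeFn_toL1] with x hsub hs h0 hfs hf0
    simp_all [τ, shift, Real.norm_eq_abs]
  simpa [hdist] using tendsto_iff_dist_tendsto_zero.mp hτ

section Periodic

variable {h : ℝ → ℝ} {C : ℝ} {f : ℝ → ℝ}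

theorem integrable_prod_comp_mul_sub_mul (hh : Measurable h) (hC : ∀ t, ‖h t‖ ≤ C)
    (hf : Integrable f volume) (c : ℝ) :
    Integrable (fun p : ℝ × ℝ => h (c * p.2 - p.1) * f p.2)
      ((volume.restrict (Set.Ioc 0 1)).prod volume) := by
  refine ((integrable_const C).mul_prod hf.norm).mono'
    ((by fun_prop : Measurable fun p : ℝ × ℝ => h (c * p.2 - p.1)).aestronglyMeasurable.mul
      hf.1.comp_snd) (.of_forall fun p => ?_)
  rw [norm_mul]
  gcongr
  exact hC _

theorem intervalIntegral_integral_comp_mul_sub_mul_eq_zero (hh : Measurable h)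
    (hC : ∀ t, ‖h t‖ ≤ C) (hper : Function.Periodic h 1) (hmean : ∫ t in (0:ℝ)..1, h t = 0)
    (hf : Integrable f volume) (c : ℝ) :
    ∫ t in (0:ℝ)..1, ∫ x, h (c * x - t) * f x = 0 := by
  rw [intervalIntegral_integral_swap (by
    rw [Set.uIoc_of_le zero_le_one]; exact integrable_prod_comp_mul_sub_mul hh hC hf c)]
  simp [intervalIntegral.integral_mul_const, hper.intervalIntegral_comp_sub, hmean]

theorem abs_integral_comp_mul_mul_le (hh : Measurable h) (hC : ∀ t, ‖h t‖ ≤ C)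
    (hper : Function.Periodic h 1) (hmean : ∫ t in (0:ℝ)..1, h t = 0)
    (hf : Integrable f volume) {c : ℝ} (hc : c ≠ 0) {η : ℝ}
    (hη : ∀ t ∈ Set.uIoc (0:ℝ) 1, ∫ x, |f (x + t / c) - f x| ≤ η) :
    |∫ x, h (c * x) * f x| ≤ C * η := by
  have hC0 : 0 ≤ C := (norm_nonneg _).trans (hC 0)
  have hint : ∀ s, Integrable (fun x => h (c * x) * f (x + s)) volume := fun s =>
    (hf.comp_add_right s).bdd_mul (hh.comp (measurable_const_mul c)).aestronglyMeasurable
      (.of_forall fun x => hC _)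
  have hint0 : Integrable (fun x => h (c * x) * f x) volume := by simpa using hint 0
  have hshift : ∀ t, ∫ x, h (c * x - t) * f x = ∫ x, h (c * x) * f (x + t / c) := fun t => by
    rw [← integral_add_right_eq_self _ (t / c)]
    simp only [mul_add, mul_div_cancel₀ t hc, add_sub_cancel_right]
  have hdiff : ∀ t, (∫ x, h (c * x) * f x) - ∫ x, h (c * x - t) * f x
      = ∫ x, h (c * x) * (f x - f (x + t / c)) := fun t => by
    rw [hshift, ← integral_sub hint0 (hint _)]
    simp only [mul_sub]
  have hdiff_le : ∀ t ∈ Set.uIoc (0:ℝ) 1, ‖∫ x, h (c * x) * (f x - f (x + t / c))‖ ≤ C * η :=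
    fun t ht => calc
      _ ≤ ∫ x, C * |f (x + t / c) - f x| :=
        norm_integral_le_of_norm_le (((hf.comp_add_right _).sub hf).abs.const_mul C)
          (.of_forall fun x => by
            rw [norm_mul, Real.norm_eq_abs (f x - _), abs_sub_comm]; gcongr; exact hC _)
      _ ≤ C * η := by rw [integral_const_mul]; gcongr; exact hη t ht
  have hI : IntervalIntegrable (fun t => ∫ x, h (c * x - t) * f x) volume 0 1 := by
    rw [intervalIntegrable_iff_integrableOn_Ioc_of_le zero_le_one]
    exact (integrable_prod_comp_mul_sub_mul hh hC hf c).integral_prod_left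
  calc |∫ x, h (c * x) * f x|
      = ‖∫ t in (0:ℝ)..1, ((∫ x, h (c * x) * f x) - ∫ x, h (c * x - t) * f x)‖ := by
        rw [intervalIntegral.integral_sub intervalIntegrable_const hI,
          intervalIntegral_integral_comp_mul_sub_mul_eq_zero hh hC hper hmean hf c]
        simp
    _ ≤ C * η * |1 - 0| := by
        simp_rw [hdiff]
        exact intervalIntegral.norm_integral_le_of_norm_le_const hdiff_le
    _ = C * η := by simp

theorem tendsto_integral_comp_mul_mul_of_intervalIntegral_eq_zero (hh : Measurable h)
    (hC : ∀ t, ‖h t‖ ≤ C) (hper : Function.Periodic h 1) (hmean : ∫ t in (0:ℝ)..1, h t = 0)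
    (hf : Integrable f volume) :
    Tendsto (fun c : ℝ => ∫ x, h (c * x) * f x) atTop (𝓝 0) := by
  have hC0 : 0 ≤ C := (norm_nonneg _).trans (hC 0)
  rw [Metric.tendsto_nhds]
  intro ε hε
  obtain ⟨δ, hδ, hsmall⟩ := Metric.eventually_nhds_iff.mp <|
    Metric.tendsto_nhds.mp hf.tendsto_integral_abs_comp_add_right_sub (ε / (C + 1)) (by positivity)
  filter_upwards [eventually_gt_atTop δ⁻¹] with c hc
  have hc0 : 0 < c := (inv_pos.mpr hδ).trans hc
  have hη : ∀ t ∈ Set.uIoc (0:ℝ) 1, ∫ x, |f (x + t / c) - f x| ≤ ε / (C + 1) := by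
    intro t ht
    rw [Set.uIoc_of_le zero_le_one] at ht
    have hty : dist (t / c) 0 < δ := by
      rw [Real.dist_eq, sub_zero, abs_of_pos (div_pos ht.1 hc0), div_lt_iff₀ hc0, mul_comm]
      calc t ≤ 1 := ht.2
        _ < c * δ := (inv_lt_iff_one_lt_mul₀ hδ).mp hc
    have := hsmall hty
    rw [Real.dist_eq, sub_zero, abs_of_nonneg (integral_nonneg fun _ => abs_nonneg _)] at this
    exact this.le
  rw [Real.dist_eq, sub_zero]
  calc _ ≤ C * (ε / (C + 1)) := abs_integral_comp_mul_mul_le hh hC hper hmean hf hc0.ne' hη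
    _ < ε := by rw [mul_div_assoc', div_lt_iff₀ (by positivity)]; nlinarith

theorem tendsto_integral_comp_mul_of_absolutelyContinuous (hh : Measurable h)
    (hC : ∀ t, ‖h t‖ ≤ C) (hper : Function.Periodic h 1) {μ : Measure ℝ} [IsFiniteMeasure μ]
    (hμ : μ ≪ volume) :
    Tendsto (fun c : ℝ => ∫ x, h (c * x) ∂μ) atTop
      (𝓝 (μ.real Set.univ * ∫ t in (0:ℝ)..1, h t)) := by
  set m := ∫ t in (0:ℝ)..1, h t
  set ρ : ℝ → ℝ := fun x => (μ.rnDeriv volume x).toReal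
  have hρ : Integrable ρ volume := Measure.integrable_toReal_rnDeriv
  have hmean : ∫ t in (0:ℝ)..1, (h t - m) = 0 := by
    rw [intervalIntegral.integral_sub ((intervalIntegrable_const (c := C)).mono_fun'
      hh.aestronglyMeasurable (.of_forall hC)) intervalIntegrable_const]
    simp [m]
  have hcentered := tendsto_integral_comp_mul_mul_of_intervalIntegral_eq_zero
    (h := fun t => h t - m) (C := C + ‖m‖) (by fun_prop)
    (fun t => (norm_sub_le _ _).trans (add_le_add_left (hC t) _))
    (fun t => by simp [hper t]) hmean hρ
  have hsplit : ∀ c : ℝ,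
      ∫ x, h (c * x) ∂μ = (∫ x, (h (c * x) - m) * ρ x) + μ.real Set.univ * m := by
    intro c
    have hint : Integrable (fun x => (h (c * x) - m) * ρ x) volume :=
      hρ.bdd_mul (by fun_prop : Measurable fun x => h (c * x) - m).aestronglyMeasurable
        (.of_forall fun x => (norm_sub_le _ _).trans (add_le_add_left (hC _) _))
    rw [← integral_rnDeriv_smul hμ, ← Measure.integral_toReal_rnDeriv hμ, ← integral_mul_const,
      ← integral_add hint (hρ.mul_const m)]
    congr 1 with x
    simp only [smul_eq_mul, ρ]
    ring
  simpa [hsplit] using hcentered.add_const (μ.real Set.univ * m)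

end Periodic

theorem intervalIntegral_comp_fract_eq_integral_Icc (g : ℝ → ℝ) :
    ∫ t in (0:ℝ)..1, g (Int.fract t) = ∫ u in Set.Icc (0:ℝ) 1, g u := by
  rw [intervalIntegral.integral_of_le zero_le_one, integral_Icc_eq_integral_Ioo,
    integral_Ioc_eq_integral_Ioo]
  refine setIntegral_congr_fun measurableSet_Ioo fun t ht => ?_
  rw [Int.fract_eq_self.mpr ⟨ht.1.le, ht.2⟩]

theorem sub_floor_mul_div_eq_fract_mul_div (x : ℝ) {c : ℝ} (hc : c ≠ 0) :
    x - ⌊c * x⌋ / c = Int.fract (c * x) / c := by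
  rw [Int.fract, sub_div, mul_div_cancel_left₀ x hc]

/-- For `X` with a density and `Xₙ = ⌊nX⌋/n`: the pointwise bound `|X − Xₙ| ≤ 1/n`,
almost sure convergence `Xₙ → X`, and `n(X − Xₙ) = {nX}` converges in distribution to
the uniform law on `[0,1]`. -/
theorem floor_approx_properties
    {Ω : Type*} [MeasurableSpace Ω] (P : Measure Ω) [IsProbabilityMeasure P]
    (X : Ω → ℝ) (hX : Measurable X) (hac : P.map X ≪ volume) :
    (∀ (n : ℕ), 0 < n → ∀ ω, |X ω - (⌊(n : ℝ) * X ω⌋ : ℝ) / n| ≤ 1 / n) ∧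
    (∀ᵐ ω ∂P, Tendsto (fun n : ℕ => (⌊(n : ℝ) * X ω⌋ : ℝ) / n) atTop (nhds (X ω))) ∧
    (∀ g : BoundedContinuousFunction ℝ ℝ,
      Tendsto (fun n : ℕ => ∫ ω, g (Int.fract ((n : ℝ) * X ω)) ∂P) atTop
        (nhds (∫ u in Set.Icc (0:ℝ) 1, g u))) := by
  have hbound : ∀ (n : ℕ), 0 < n → ∀ ω, |X ω - (⌊(n : ℝ) * X ω⌋ : ℝ) / n| ≤ 1 / n := by
    intro n hn ω
    have hn' : (0 : ℝ) < n := Nat.cast_pos.mpr hn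
    rw [sub_floor_mul_div_eq_fract_mul_div _ hn'.ne', abs_of_nonneg (by positivity)]
    gcongr
    exact (Int.fract_lt_one _).le
  refine ⟨hbound, .of_forall fun ω => ?_, fun g => ?_⟩
  · refine tendsto_iff_dist_tendsto_zero.mpr <|
      squeeze_zero' (.of_forall fun _ => dist_nonneg) ?_ tendsto_one_div_atTop_nhds_zero_nat
    filter_upwards [eventually_gt_atTop 0] with n hn
    rw [Real.dist_eq, abs_sub_comm]
    exact hbound n hn ω
  · have : IsProbabilityMeasure (P.map X) := Measure.isProbabilityMeasure_map hX.aemeasurable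
    have hlim := tendsto_integral_comp_mul_of_absolutelyContinuous
      (h := fun t => g (Int.fract t)) (g.continuous.measurable.comp measurable_fract)
      (fun t => g.norm_coe_le_norm _)
      (fun t => by simp [Int.fract_add_one]) hac
    rw [probReal_univ, one_mul, intervalIntegral_comp_fract_eq_integral_Icc] at hlim
    refine (hlim.comp tendsto_natCast_atTop_atTop).congr fun n => integral_map hX.aemeasurable ?_
    exact (g.continuous.measurable.comp (measurable_fract.comp (measurable_const_mul _)))
      |>.aestronglyMeasurable
end

section
/- Let θ be bounded measurable 1-periodic with ∫₀¹ θ = 0, ∫₀¹ θ² = 1, and let ξ ∈ L²([0,1]). Then n² ∫₀¹ ξ(s)² |e^{iθ(ns)/n} − 1|² ds → ∫₀¹ ξ(s)² ds as n → ∞. -/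
open MeasureTheory Filter Complex

private lemma bddMeas_intervalIntegrable {f : ℝ → ℝ}
    (hf : AEStronglyMeasurable f volume) {K : ℝ} (hK : ∀ s, |f s| ≤ K) (a b : ℝ) :
    IntervalIntegrable f volume a b := by
  rw [intervalIntegrable_iff]
  refine ⟨hf.restrict, ?_⟩
  refine MeasureTheory.HasFiniteIntegral.restrict_of_bounded
    (C := K) ?_ (Eventually.of_forall fun x => by simpa [Real.norm_eq_abs] using hK x)
  exact lt_of_le_of_lt (measure_mono Set.uIoc_subset_uIcc) isCompact_uIcc.measure_lt_top

private lemma avg_cont (g : ℝ → ℝ) (hgm : Measurable g) (B : ℝ) (hB : ∀ s, |g s| ≤ B)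
    (hg : Function.Periodic g 1) (φ : ℝ → ℝ) (hφc : Continuous φ)
    (Cφ : ℝ) (hφb : ∀ s, |φ s| ≤ Cφ) :
    Tendsto (fun n : ℕ => ∫ s in (0:ℝ)..1, φ s * g (n * s)) atTop
      (nhds ((∫ s in (0:ℝ)..1, φ s) * (∫ s in (0:ℝ)..1, g s))) := by
  set m : ℝ := ∫ s in (0:ℝ)..1, g s with hm
  have hB0 : (0:ℝ) ≤ B := le_trans (abs_nonneg _) (hB 0)
  -- integrability helpers
  have hGm : ∀ n : ℕ, AEStronglyMeasurable (fun s => g ((n:ℝ) * s) - m) volume :=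
    fun n => ((hgm.comp (measurable_const_mul _)).sub measurable_const).aestronglyMeasurable
  have hGb : ∀ (n : ℕ) (s : ℝ), |g ((n:ℝ) * s) - m| ≤ B + |m| :=
    fun n s => (abs_sub _ _).trans (by gcongr; exact hB _)
  have hGint : ∀ (n : ℕ) (a b : ℝ),
      IntervalIntegrable (fun s => g ((n:ℝ) * s) - m) volume a b :=
    fun n a b => bddMeas_intervalIntegrable (hGm n) (hGb n) a b
  have hhm : ∀ n : ℕ, AEStronglyMeasurable (fun s => φ s * (g ((n:ℝ) * s) - m)) volume :=
    fun n => hφc.aestronglyMeasurable.mul (hGm n)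
  have hhb : ∀ (n : ℕ) (s : ℝ), |φ s * (g ((n:ℝ) * s) - m)| ≤ Cφ * (B + |m|) := by
    intro n s
    rw [abs_mul]
    exact mul_le_mul (hφb s) (hGb n s) (abs_nonneg _) (le_trans (abs_nonneg _) (hφb s))
  have hhint : ∀ (n : ℕ) (a b : ℝ),
      IntervalIntegrable (fun s => φ s * (g ((n:ℝ) * s) - m)) volume a b :=
    fun n a b => bddMeas_intervalIntegrable (hhm n) (hhb n) a b
  rw [Metric.tendsto_atTop]
  intro ε hε
  have hKpos : (0:ℝ) < B + |m| + 1 := by positivity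
  set ε' : ℝ := ε / (B + |m| + 1) with hε'
  have hε'pos : 0 < ε' := div_pos hε hKpos
  -- uniform continuity on [0,1]
  have huc := (isCompact_Icc : IsCompact (Set.Icc (0:ℝ) 1)).uniformContinuousOn_of_continuous
    hφc.continuousOn
  rw [Metric.uniformContinuousOn_iff] at huc
  obtain ⟨δ, hδpos, hδ⟩ := huc ε' hε'pos
  obtain ⟨N, hN⟩ := exists_nat_gt (1/δ)
  refine ⟨max N 1, fun n hn => ?_⟩
  have hn1 : 1 ≤ n := le_trans (le_max_right _ _) hn
  have hnN : N ≤ n := le_trans (le_max_left _ _) hn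
  have hnpos : (0:ℝ) < n := by exact_mod_cast hn1
  have hNpos : (0:ℝ) < N := lt_of_lt_of_le (lt_of_le_of_lt (by positivity) hN) (by exact_mod_cast le_refl N)
  have hδn : (1:ℝ)/n < δ := by
    have h1 : (1:ℝ)/n ≤ 1/N := by
      apply one_div_le_one_div_of_le hNpos
      exact_mod_cast hnN
    have h2 : (1:ℝ)/N < δ := by
      rw [div_lt_iff₀ hNpos]
      rw [div_lt_iff₀ hδpos] at hN
      nlinarith
    linarith
  set a : ℕ → ℝ := fun k => (k : ℝ) / n with ha
  -- each small interval contributes at most ε' * (B + |m|) / n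
  have piece0 : ∀ k : ℕ, ∫ s in a k..a (k+1), (g ((n:ℝ) * s) - m) = 0 := by
    intro k
    rw [intervalIntegral.integral_sub (by
        exact bddMeas_intervalIntegrable
          (hgm.comp (measurable_const_mul _)).aestronglyMeasurable (fun s => hB _) _ _)
      (intervalIntegrable_const)]
    have h1 : ∫ s in a k..a (k+1), g ((n:ℝ) * s)
        = ((n:ℝ))⁻¹ • ∫ x in ((n:ℝ) * a k)..((n:ℝ) * a (k+1)), g x :=
      intervalIntegral.integral_comp_mul_left g hnpos.ne'
    have h2 : (n:ℝ) * a k = (k:ℝ) := by simp only [ha]; field_simp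
    have h3 : (n:ℝ) * a (k+1) = (k:ℝ) + 1 := by push_cast [ha]; field_simp
    have h4 : ∫ x in ((k:ℝ))..((k:ℝ)+1), g x = m := by
      rw [hg.intervalIntegral_add_eq (k:ℝ) 0, zero_add, hm]
    rw [h1, h2, h3, h4, intervalIntegral.integral_const]
    have h5 : a (k+1) - a k = 1/(n:ℝ) := by push_cast [ha]; field_simp; ring
    rw [h5]
    simp
  have piece : ∀ k : ℕ, k < n →
      ‖∫ s in a k..a (k+1), φ s * (g ((n:ℝ) * s) - m)‖ ≤ ε' * (B + |m|) * (1/n) := by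
    intro k hk
    have hle : a k ≤ a (k+1) := by
      rw [ha, div_le_div_iff_of_pos_right hnpos]
      push_cast; linarith
    have h5 : |a (k+1) - a k| = 1/(n:ℝ) := by
      rw [_root_.abs_of_nonneg (by linarith)]
      push_cast [ha]; field_simp; ring
    have e1 : ∫ s in a k..a (k+1), φ s * (g ((n:ℝ)*s) - m)
        = ∫ s in a k..a (k+1), (φ s - φ (a k)) * (g ((n:ℝ)*s) - m) := by
      have heq : (fun s => (φ s - φ (a k)) * (g ((n:ℝ)*s) - m))
          = fun s => φ s * (g ((n:ℝ)*s) - m) - φ (a k) * (g ((n:ℝ)*s) - m) :=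
        funext fun s => by ring
      rw [heq, intervalIntegral.integral_sub (hhint n _ _) ((hGint n _ _).const_mul _),
        intervalIntegral.integral_const_mul, piece0 k, mul_zero, sub_zero]
    have hak01 : a k ∈ Set.Icc (0:ℝ) 1 := by
      constructor
      · rw [ha]; positivity
      · rw [ha, div_le_one hnpos]
        exact_mod_cast hk.le
    have hsucc1 : a (k+1) ≤ 1 := by
      rw [ha, div_le_one hnpos]
      exact_mod_cast hk
    rw [e1]
    calc ‖∫ s in a k..a (k+1), (φ s - φ (a k)) * (g ((n:ℝ)*s) - m)‖
        ≤ (ε' * (B + |m|)) * |a (k+1) - a k| := by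
          apply intervalIntegral.norm_integral_le_of_norm_le_const
          intro x hx
          rw [Set.uIoc_of_le hle] at hx
          have hx01 : x ∈ Set.Icc (0:ℝ) 1 :=
            ⟨le_trans hak01.1 hx.1.le, le_trans hx.2 hsucc1⟩
          have hdist : dist x (a k) < δ := by
            rw [Real.dist_eq, _root_.abs_of_nonneg (by linarith [hx.1.le] : (0:ℝ) ≤ x - a k)]
            have : x - a k ≤ 1/(n:ℝ) := by
              have := hx.2
              have h5' := h5
              rw [_root_.abs_of_nonneg (by linarith)] at h5'
              linarith
            linarith
          have hφd : |φ x - φ (a k)| ≤ ε' := by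
            have := hδ x hx01 (a k) hak01 hdist
            rw [Real.dist_eq] at this
            exact this.le
          rw [Real.norm_eq_abs, abs_mul]
          exact mul_le_mul hφd (hGb n x) (abs_nonneg _) hε'pos.le
      _ = ε' * (B + |m|) * (1/n) := by rw [h5]
  -- sum over pieces
  have i1 : IntervalIntegrable (fun s => φ s * g ((n:ℝ)*s)) volume 0 1 :=
    bddMeas_intervalIntegrable
      ((hφc.measurable.mul
        (hgm.comp (measurable_const_mul ((n:ℕ):ℝ)) : Measurable fun s : ℝ => g ((n:ℝ)*s))
        : Measurable fun s : ℝ => φ s * g ((n:ℝ)*s)).aestronglyMeasurable)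
      (K := Cφ * B)
      (fun s => by
        rw [Pi.mul_apply, abs_mul]
        exact mul_le_mul (hφb s) (hB _) (abs_nonneg _) (le_trans (abs_nonneg _) (hφb s))) 0 1
  have hsplit : (∫ s in (0:ℝ)..1, φ s * g ((n:ℝ)*s)) - (∫ s in (0:ℝ)..1, φ s) * m
      = ∫ s in (0:ℝ)..1, φ s * (g ((n:ℝ)*s) - m) := by
    have heq : (fun s => φ s * (g ((n:ℝ)*s) - m))
        = fun s => φ s * g ((n:ℝ)*s) - φ s * m := funext fun s => by ring
    rw [heq, intervalIntegral.integral_sub i1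
      ((show Continuous fun s => φ s * m from hφc.mul continuous_const).intervalIntegrable 0 1),
      intervalIntegral.integral_mul_const]
  have hsum : ∫ s in (0:ℝ)..1, φ s * (g ((n:ℝ)*s) - m)
      = ∑ k ∈ Finset.range n, ∫ s in a k..a (k+1), φ s * (g ((n:ℝ)*s) - m) := by
    rw [intervalIntegral.sum_integral_adjacent_intervals (fun k _ => hhint n _ _)]
    have h0 : a 0 = 0 := by simp [ha]
    have h1 : a n = 1 := by rw [ha]; exact div_self hnpos.ne'
    rw [h0, h1]
  rw [Real.dist_eq, hsplit, hsum]
  calc |∑ k ∈ Finset.range n, ∫ s in a k..a (k+1), φ s * (g ((n:ℝ)*s) - m)|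
      ≤ ∑ k ∈ Finset.range n, |∫ s in a k..a (k+1), φ s * (g ((n:ℝ)*s) - m)| :=
        Finset.abs_sum_le_sum_abs _ _
    _ ≤ ∑ k ∈ Finset.range n, ε' * (B + |m|) * (1/n) :=
        Finset.sum_le_sum fun k hk => by
          have := piece k (Finset.mem_range.mp hk)
          rwa [Real.norm_eq_abs] at this
    _ = ε' * (B + |m|) := by
        rw [Finset.sum_const, Finset.card_range, nsmul_eq_mul]
        field_simp
    _ < ε := by
        rw [hε']
        rw [div_mul_eq_mul_div, div_lt_iff₀ hKpos]
        nlinarith [abs_nonneg m]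

private lemma avg_lemma (g : ℝ → ℝ) (hgm : Measurable g) (B : ℝ) (hB : ∀ s, |g s| ≤ B)
    (hg : Function.Periodic g 1) (F : ℝ → ℝ)
    (hF : IntegrableOn F (Set.Icc (0:ℝ) 1) volume) :
    Tendsto (fun n : ℕ => ∫ s in Set.Icc (0:ℝ) 1, F s * g (n * s)) atTop
      (nhds ((∫ s in Set.Icc (0:ℝ) 1, F s) * (∫ s in Set.Icc (0:ℝ) 1, g s))) := by
  have conv : ∀ f : ℝ → ℝ, ∫ s in Set.Icc (0:ℝ) 1, f s = ∫ s in (0:ℝ)..1, f s := fun f => by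
    rw [intervalIntegral.integral_of_le zero_le_one, integral_Icc_eq_integral_Ioc]
  set m : ℝ := ∫ s in Set.Icc (0:ℝ) 1, g s with hm
  have hB0 : (0:ℝ) ≤ B := le_trans (abs_nonneg _) (hB 0)
  rw [Metric.tendsto_atTop]
  intro ε hε
  have hKpos : (0:ℝ) < B + |m| + 1 := by positivity
  set ε₁ : ℝ := ε / (2 * (B + |m| + 1)) with hε₁
  have hε₁pos : 0 < ε₁ := by positivity
  set F' : ℝ → ℝ := (Set.Icc (0:ℝ) 1).indicator F with hF'def
  have hF' : Integrable F' volume := (integrable_indicator_iff measurableSet_Icc).mpr hF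
  obtain ⟨φ, hφs, hφnear, hφc, hφint⟩ := hF'.exists_hasCompactSupport_integral_sub_le hε₁pos
  obtain ⟨Cφ, hCφ⟩ := hφs.exists_bound_of_continuous hφc
  have hCφ' : ∀ s, |φ s| ≤ Cφ := fun s => by simpa [Real.norm_eq_abs] using hCφ s
  -- (i) L¹ closeness on the interval
  have hφIcc : IntegrableOn φ (Set.Icc (0:ℝ) 1) volume := hφc.integrableOn_Icc
  have hnear : ∫ s in Set.Icc (0:ℝ) 1, |F s - φ s| ≤ ε₁ := by
    have e : ∫ s in Set.Icc (0:ℝ) 1, |F s - φ s| = ∫ s in Set.Icc (0:ℝ) 1, ‖F' s - φ s‖ :=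
      setIntegral_congr_fun measurableSet_Icc fun s hs => by
        rw [hF'def, Set.indicator_of_mem hs, Real.norm_eq_abs]
    rw [e]
    exact le_trans
      (setIntegral_le_integral (hF'.sub hφint).norm
        (Eventually.of_forall fun x => norm_nonneg _)) hφnear
  -- (ii) the continuous part converges
  have hcont := avg_cont g hgm B hB hg φ hφc Cφ hCφ'
  rw [Metric.tendsto_atTop] at hcont
  obtain ⟨N, hN⟩ := hcont (ε/2) (half_pos hε)
  refine ⟨N, fun n hn => ?_⟩
  have hb2 : |(∫ s in Set.Icc (0:ℝ) 1, φ s * g ((n:ℕ) * s)) -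
      (∫ s in Set.Icc (0:ℝ) 1, φ s) * m| < ε/2 := by
    have := hN n hn
    rw [Real.dist_eq] at this
    rw [conv (fun s => φ s * g ((n:ℕ) * s)), conv φ, hm, conv g]
    exact this
  -- integrability facts on the interval
  have hGsm : AEStronglyMeasurable (fun s : ℝ => g ((n:ℝ) * s))
      (volume.restrict (Set.Icc (0:ℝ) 1)) :=
    ((hgm.comp (measurable_const_mul _)) : Measurable fun s : ℝ => g ((n:ℝ)*s))
      |>.aestronglyMeasurable.restrict
  have hFg : IntegrableOn (fun s => F s * g ((n:ℝ) * s)) (Set.Icc (0:ℝ) 1) volume := by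
    have h1 := hF.bdd_mul hGsm (c := B) (Eventually.of_forall fun x => by simpa [Real.norm_eq_abs] using hB _)
    exact h1.congr (Eventually.of_forall fun s => mul_comm _ _)
  have hφg : IntegrableOn (fun s => φ s * g ((n:ℝ) * s)) (Set.Icc (0:ℝ) 1) volume := by
    have h1 := hφIcc.bdd_mul hGsm (c := B) (Eventually.of_forall fun x => by simpa [Real.norm_eq_abs] using hB _)
    exact h1.congr (Eventually.of_forall fun s => mul_comm _ _)
  have hFφg : IntegrableOn (fun s => (F s - φ s) * g ((n:ℝ) * s)) (Set.Icc (0:ℝ) 1) volume := by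
    have h1 := (hF.sub hφIcc).bdd_mul hGsm (c := B) (Eventually.of_forall fun x => by simpa [Real.norm_eq_abs] using hB _)
    exact h1.congr (Eventually.of_forall fun s => mul_comm _ _)
  -- decomposition bound
  have e1 : ∫ s in Set.Icc (0:ℝ) 1, (F s - φ s) * g ((n:ℝ) * s)
      = (∫ s in Set.Icc (0:ℝ) 1, F s * g ((n:ℝ) * s))
        - ∫ s in Set.Icc (0:ℝ) 1, φ s * g ((n:ℝ) * s) := by
    have heq : (fun s => (F s - φ s) * g ((n:ℝ) * s))
        = fun s => F s * g ((n:ℝ) * s) - φ s * g ((n:ℝ) * s) := funext fun s => by ring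
    rw [heq, integral_sub hFg hφg]
  have b1 : |∫ s in Set.Icc (0:ℝ) 1, (F s - φ s) * g ((n:ℝ) * s)| ≤ B * ε₁ := by
    calc |∫ s in Set.Icc (0:ℝ) 1, (F s - φ s) * g ((n:ℝ) * s)|
        ≤ ∫ s in Set.Icc (0:ℝ) 1, ‖(F s - φ s) * g ((n:ℝ) * s)‖ := by
          simpa [Real.norm_eq_abs] using
            norm_integral_le_integral_norm (μ := volume.restrict (Set.Icc (0:ℝ) 1))
              (fun s => (F s - φ s) * g ((n:ℝ) * s))
      _ ≤ ∫ s in Set.Icc (0:ℝ) 1, |F s - φ s| * B := by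
          apply integral_mono hFφg.norm ((hF.sub hφIcc).abs.mul_const B)
          intro s
          simp only [Real.norm_eq_abs, Pi.sub_apply, abs_mul]
          exact mul_le_mul_of_nonneg_left (hB _) (abs_nonneg _)
      _ = (∫ s in Set.Icc (0:ℝ) 1, |F s - φ s|) * B := integral_mul_const _ _
      _ ≤ ε₁ * B := mul_le_mul_of_nonneg_right hnear hB0
      _ = B * ε₁ := mul_comm _ _
  have b3 : |((∫ s in Set.Icc (0:ℝ) 1, φ s) - ∫ s in Set.Icc (0:ℝ) 1, F s) * m| ≤ ε₁ * |m| := by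
    rw [abs_mul]
    apply mul_le_mul_of_nonneg_right _ (abs_nonneg m)
    calc |(∫ s in Set.Icc (0:ℝ) 1, φ s) - ∫ s in Set.Icc (0:ℝ) 1, F s|
        = |∫ s in Set.Icc (0:ℝ) 1, (φ s - F s)| := by rw [integral_sub hφIcc hF]
      _ ≤ ∫ s in Set.Icc (0:ℝ) 1, ‖φ s - F s‖ := by
          simpa [Real.norm_eq_abs] using
            norm_integral_le_integral_norm (μ := volume.restrict (Set.Icc (0:ℝ) 1))
              (fun s => φ s - F s)
      _ = ∫ s in Set.Icc (0:ℝ) 1, |F s - φ s| :=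
          setIntegral_congr_fun measurableSet_Icc fun s _ => by
            rw [Real.norm_eq_abs, abs_sub_comm]
      _ ≤ ε₁ := hnear
  rw [Real.dist_eq]
  have hdecomp : (∫ s in Set.Icc (0:ℝ) 1, F s * g ((n:ℝ) * s))
      - (∫ s in Set.Icc (0:ℝ) 1, F s) * m
      = (∫ s in Set.Icc (0:ℝ) 1, (F s - φ s) * g ((n:ℝ) * s))
        + ((∫ s in Set.Icc (0:ℝ) 1, φ s * g ((n:ℝ) * s))
            - (∫ s in Set.Icc (0:ℝ) 1, φ s) * m)
        + ((∫ s in Set.Icc (0:ℝ) 1, φ s) - ∫ s in Set.Icc (0:ℝ) 1, F s) * m := by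
    rw [e1]; ring
  have hfinal : |(∫ s in Set.Icc (0:ℝ) 1, F s * g ((n:ℝ) * s))
      - (∫ s in Set.Icc (0:ℝ) 1, F s) * m| ≤ B * ε₁ + ε/2 + ε₁ * |m| := by
    rw [hdecomp]
    exact le_trans (abs_add_le _ _)
      (add_le_add (le_trans (abs_add_le _ _) (add_le_add b1 hb2.le)) b3)
  refine lt_of_le_of_lt hfinal ?_
  have harith : B * ε₁ + ε₁ * |m| < ε/2 := by
    have e : B * ε₁ + ε₁ * |m| = ε * ((B + |m|) / (2 * (B + |m| + 1))) := by
      rw [hε₁]; ring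
    have hlt : (B + |m|) / (2 * (B + |m| + 1)) < 1/2 := by
      rw [div_lt_iff₀ (by positivity : (0:ℝ) < 2 * (B + |m| + 1))]
      linarith
    rw [e]
    calc ε * ((B + |m|) / (2 * (B + |m| + 1))) < ε * (1/2) :=
          mul_lt_mul_of_pos_left hlt hε
      _ = ε / 2 := by ring
  linarith

private lemma abs_exp_I_sub_one_sq (t : ℝ) :
    (‖Complex.exp ((t : ℂ) * Complex.I) - 1‖)^2 = 2 - 2 * Real.cos t := by
  rw [Complex.sq_norm]
  simp only [Complex.normSq_apply, Complex.sub_re, Complex.sub_im,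
    Complex.exp_ofReal_mul_I_re, Complex.exp_ofReal_mul_I_im, Complex.one_re, Complex.one_im]
  nlinarith [Real.sin_sq_add_cos_sq t]

private lemma sin_sq_lower {y : ℝ} (h0 : 0 ≤ y) (h1 : y ≤ 1) :
    y ^ 2 - y ^ 4 / 2 ≤ Real.sin y ^ 2 := by
  rcases eq_or_lt_of_le h0 with h | h
  · simp [← h]
  · have hgt : y - y ^ 3 / 4 < Real.sin y := by
      have := Real.sin_gt_sub_cube h; nlinarith [pow_pos h 3]
    have hy3 : 0 ≤ y - y ^ 3 := by
      have := mul_nonneg (mul_nonneg h0 (by linarith : 0 ≤ 1 - y)) (by linarith : 0 ≤ 1 + y)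
      nlinarith [this]
    have hpos : 0 ≤ y - y ^ 3 / 4 := by nlinarith
    have hsq : (y - y ^ 3 / 4) ^ 2 ≤ Real.sin y ^ 2 := by
      have := pow_le_pow_left₀ hpos hgt.le 2
      linarith
    nlinarith [sq_nonneg (y ^ 3), hsq]

private lemma cos_quartic_bound {t : ℝ} (ht : |t| ≤ 2) :
    |2 - 2 * Real.cos t - t ^ 2| ≤ t ^ 4 / 8 := by
  have hx : Real.sin (t/2) ^ 2 = 1/2 - Real.cos t / 2 := by
    have h1 : Real.cos (2 * (t/2)) = 2 * Real.cos (t/2) ^ 2 - 1 := Real.cos_two_mul _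
    have h2 : Real.sin (t/2)^2 + Real.cos (t/2)^2 = 1 := Real.sin_sq_add_cos_sq _
    have h3 : 2 * (t/2) = t := by ring
    rw [h3] at h1
    linarith
  have hsq : Real.sin (t/2) ^ 2 = Real.sin |t/2| ^ 2 := by
    rcases abs_cases (t/2) with ⟨h, _⟩ | ⟨h, _⟩ <;> rw [h]
    simp [Real.sin_neg]
  have hx1 : |t/2| ≤ 1 := by
    rw [abs_div]
    rw [abs_le] at ht
    rw [div_le_one (by norm_num : (0:ℝ) < |2|)]
    rw [abs_le]
    constructor <;> simp <;> linarith
  have h1 : Real.sin (t/2) ^ 2 ≤ (t/2) ^ 2 := Real.sin_sq_le_sq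
  have h2 : |t/2| ^ 2 - |t/2| ^ 4 / 2 ≤ Real.sin |t/2| ^ 2 :=
    sin_sq_lower (abs_nonneg _) hx1
  rw [← hsq] at h2
  have ha2 : |t/2| ^ 2 = (t/2) ^ 2 := _root_.sq_abs _
  have ha4 : |t/2| ^ 4 = (t/2) ^ 4 := by
    rw [show (4 : ℕ) = 2 * 2 from rfl, pow_mul, pow_mul, ha2]
  rw [ha2, ha4] at h2
  rw [abs_le]
  constructor <;> nlinarith

/-- First-chaos Dirichlet-form convergence:
`n² ∫₀¹ ξ(s)² |e^{iθ(ns)/n} − 1|² ds → ∫₀¹ ξ(s)² ds`. -/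
theorem n_sq_exp_dirichlet_tendsto
    (θ : ℝ → ℝ) (hθm : Measurable θ) (C : ℝ) (hθb : ∀ s, |θ s| ≤ C)
    (hper : Function.Periodic θ 1)
    (hmean : ∫ s in Set.Icc (0:ℝ) 1, θ s = 0)
    (hmsq : ∫ s in Set.Icc (0:ℝ) 1, (θ s)^2 = 1)
    (ξ : ℝ → ℝ) (hξ : MeasureTheory.MemLp ξ 2 (volume.restrict (Set.Icc (0:ℝ) 1))) :
    Tendsto
      (fun n : ℕ => (n : ℝ)^2 * ∫ s in Set.Icc (0:ℝ) 1,
        (ξ s)^2 * (‖Complex.exp ((θ ((n : ℝ) * s) / n) * Complex.I) - 1‖)^2)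
      atTop (nhds (∫ s in Set.Icc (0:ℝ) 1, (ξ s)^2)) := by
  have hC0 : (0:ℝ) ≤ C := le_trans (abs_nonneg _) (hθb 0)
  set F : ℝ → ℝ := fun s => (ξ s)^2 with hFdef
  have hF : IntegrableOn F (Set.Icc (0:ℝ) 1) volume := hξ.integrable_sq
  -- the averaged sequence
  have hg2m : Measurable (fun s => (θ s)^2) := hθm.pow_const 2
  have hg2b : ∀ s, |(θ s)^2| ≤ C^2 := fun s => by
    rw [_root_.abs_pow]
    exact pow_le_pow_left₀ (abs_nonneg _) (hθb s) 2
  have hg2per : Function.Periodic (fun s => (θ s)^2) 1 := fun x => by simp [hper x]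
  have havg := avg_lemma _ hg2m (C^2) hg2b hg2per F hF
  rw [hmsq, mul_one] at havg
  -- notation for the two sequences
  set A : ℕ → ℝ := fun n => ∫ s in Set.Icc (0:ℝ) 1, F s * (θ ((n:ℝ) * s))^2 with hA
  set T : ℕ → ℝ := fun n => (n:ℝ)^2 * ∫ s in Set.Icc (0:ℝ) 1,
      F s * (2 - 2 * Real.cos (θ ((n:ℝ) * s) / n)) with hT
  -- the target function agrees with T
  have hTeq : (fun n : ℕ => (n : ℝ)^2 * ∫ s in Set.Icc (0:ℝ) 1,
      (ξ s)^2 * (‖Complex.exp ((θ ((n : ℝ) * s) / n) * Complex.I) - 1‖)^2) = T := by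
    funext n
    rw [hT]
    congr 1
    apply setIntegral_congr_fun measurableSet_Icc
    intro s _
    have hc : ((θ ((n:ℝ)*s) : ℂ) / (n:ℂ)) = ((θ ((n:ℝ)*s) / (n:ℝ) : ℝ) : ℂ) := by
      push_cast; ring
    simp only [hc, abs_exp_I_sub_one_sq, hFdef]
  -- the error bound
  have hIT : ∀ n : ℕ, IntegrableOn
      (fun s => F s * (2 - 2 * Real.cos (θ ((n:ℝ) * s) / n))) (Set.Icc (0:ℝ) 1) volume := by
    intro n
    have hsm : AEStronglyMeasurable (fun s : ℝ => 2 - 2 * Real.cos (θ ((n:ℝ) * s) / n))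
        (volume.restrict (Set.Icc (0:ℝ) 1)) := by
      apply Measurable.aestronglyMeasurable
      exact (measurable_const.sub (((Real.measurable_cos.comp
        ((hθm.comp (measurable_const_mul _)).div_const _))).const_mul 2))
    have h1 := hF.bdd_mul hsm (c := 4) (Eventually.of_forall fun x => by
      rw [Real.norm_eq_abs]
      have := Real.neg_one_le_cos (θ ((n:ℝ) * x) / n)
      have := Real.cos_le_one (θ ((n:ℝ) * x) / n)
      rw [abs_le]; constructor <;> linarith)
    exact h1.congr (Eventually.of_forall fun s => mul_comm _ _)
  have hIA : ∀ n : ℕ, IntegrableOn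
      (fun s => F s * (θ ((n:ℝ) * s))^2) (Set.Icc (0:ℝ) 1) volume := by
    intro n
    have hsm : AEStronglyMeasurable (fun s : ℝ => (θ ((n:ℝ) * s))^2)
        (volume.restrict (Set.Icc (0:ℝ) 1)) :=
      (((hθm.comp (measurable_const_mul _)).pow_const 2)).aestronglyMeasurable
    have h1 := hF.bdd_mul hsm (c := C^2) (Eventually.of_forall fun x => by
      rw [Real.norm_eq_abs]; exact hg2b _)
    exact h1.congr (Eventually.of_forall fun s => mul_comm _ _)
  set K : ℝ := C^4/8 * ∫ s in Set.Icc (0:ℝ) 1, |F s| with hK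
  have hdiff : ∀ n : ℕ, (n:ℝ) ≥ max C 1 → |T n - A n| ≤ K * (1/n) := by
    intro n hn
    have hn1 : (1:ℝ) ≤ n := le_trans (le_max_right _ _) hn
    have hnC : C ≤ (n:ℝ) := le_trans (le_max_left _ _) hn
    have hnpos : (0:ℝ) < n := lt_of_lt_of_le one_pos hn1
    have e1 : T n = ∫ s in Set.Icc (0:ℝ) 1,
        (n:ℝ)^2 * (F s * (2 - 2 * Real.cos (θ ((n:ℝ) * s) / n))) := by
      rw [hT, integral_const_mul]
    have e2 : T n - A n = ∫ s in Set.Icc (0:ℝ) 1,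
        ((n:ℝ)^2 * (F s * (2 - 2 * Real.cos (θ ((n:ℝ) * s) / n)))
          - F s * (θ ((n:ℝ) * s))^2) := by
      rw [e1, hA, integral_sub ((hIT n).const_mul _) (hIA n)]
    have hbound : ∀ s : ℝ, |(n:ℝ)^2 * (F s * (2 - 2 * Real.cos (θ ((n:ℝ) * s) / n)))
        - F s * (θ ((n:ℝ) * s))^2| ≤ |F s| * (C^4/8 * (1/n)) := by
      intro s
      set t : ℝ := θ ((n:ℝ) * s) / n with htdef
      have habs_t : |t| ≤ C / n := by
        rw [htdef, _root_.abs_div, _root_.abs_of_pos hnpos]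
        gcongr
        exact hθb _
      have ht2 : |t| ≤ 2 := le_trans habs_t (by
        rw [div_le_iff₀ hnpos]; nlinarith)
      have hsq : (θ ((n:ℝ) * s))^2 = (n:ℝ)^2 * t^2 := by
        rw [htdef]; field_simp
      have e3 : (n:ℝ)^2 * (F s * (2 - 2 * Real.cos t)) - F s * (θ ((n:ℝ) * s))^2
          = F s * ((n:ℝ)^2 * (2 - 2 * Real.cos t - t^2)) := by
        rw [hsq]; ring
      rw [e3, abs_mul]
      apply mul_le_mul_of_nonneg_left _ (abs_nonneg _)
      rw [abs_mul, _root_.abs_of_nonneg (by positivity : (0:ℝ) ≤ (n:ℝ)^2)]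
      calc (n:ℝ)^2 * |2 - 2 * Real.cos t - t^2| ≤ (n:ℝ)^2 * (t^4/8) := by
            exact mul_le_mul_of_nonneg_left (cos_quartic_bound ht2) (by positivity)
        _ ≤ C^4/8 * (1/n) := by
            have ht4 : t^4 ≤ (C/n)^4 := by
              have h0 : (0:ℝ) ≤ |t| := abs_nonneg _
              calc t^4 = |t|^4 := by
                    rw [show (4:ℕ) = 2*2 from rfl, pow_mul, pow_mul, _root_.sq_abs]
                _ ≤ (C/n)^4 := pow_le_pow_left₀ h0 habs_t 4
            have hCn : (C/n)^4 = C^4 / (n:ℝ)^4 := by rw [div_pow]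
            rw [hCn] at ht4
            have hn4 : (n:ℝ)^2 * (C^4 / (n:ℝ)^4 / 8) = C^4/8 * (1/(n:ℝ)^2) := by
              field_simp
            calc (n:ℝ)^2 * (t^4/8) ≤ (n:ℝ)^2 * (C^4 / (n:ℝ)^4 / 8) := by
                  apply mul_le_mul_of_nonneg_left _ (by positivity)
                  linarith
              _ = C^4/8 * (1/(n:ℝ)^2) := hn4
              _ ≤ C^4/8 * (1/n) := by
                  apply mul_le_mul_of_nonneg_left _ (by positivity)
                  rw [div_le_div_iff₀ (by positivity) hnpos]
                  nlinarith
    rw [e2]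
    calc |∫ s in Set.Icc (0:ℝ) 1, ((n:ℝ)^2 * (F s * (2 - 2 * Real.cos (θ ((n:ℝ) * s) / n)))
          - F s * (θ ((n:ℝ) * s))^2)|
        ≤ ∫ s in Set.Icc (0:ℝ) 1, ‖(n:ℝ)^2 * (F s * (2 - 2 * Real.cos (θ ((n:ℝ) * s) / n)))
          - F s * (θ ((n:ℝ) * s))^2‖ := by
          rw [← Real.norm_eq_abs]
          exact norm_integral_le_integral_norm (μ := volume.restrict (Set.Icc (0:ℝ) 1))
              (fun s => (n:ℝ)^2 * (F s * (2 - 2 * Real.cos (θ ((n:ℝ) * s) / n)))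
                - F s * (θ ((n:ℝ) * s))^2)
      _ ≤ ∫ s in Set.Icc (0:ℝ) 1, |F s| * (C^4/8 * (1/n)) := by
          apply integral_mono (((hIT n).const_mul _).sub (hIA n)).norm
            (hF.abs.mul_const _)
          intro s
          simpa [Real.norm_eq_abs] using hbound s
      _ = K * (1/n) := by rw [integral_mul_const, hK]; ring
  -- conclude by squeezing
  have hTends0 : Tendsto (fun n : ℕ => T n - A n) atTop (nhds 0) := by
    apply squeeze_zero_norm' (a := fun n : ℕ => K * (1/(n:ℝ))) ?_ ?_
    · exact (eventually_atTop.mpr ⟨max (Nat.ceil C) 1, fun n hn => by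
        have h1 : Nat.ceil C ≤ n := le_trans (le_max_left _ _) hn
        have h2 : 1 ≤ n := le_trans (le_max_right _ _) hn
        have : (n:ℝ) ≥ max C 1 := by
          rw [ge_iff_le, max_le_iff]
          constructor
          · exact le_trans (Nat.le_ceil C) (by exact_mod_cast h1)
          · exact_mod_cast h2
        rw [Real.norm_eq_abs]
        exact hdiff n this⟩)
    · have := tendsto_one_div_atTop_nhds_zero_nat.const_mul K
      simpa using this
  have hsum : Tendsto (fun n : ℕ => A n + (T n - A n)) atTop
      (nhds ((∫ s in Set.Icc (0:ℝ) 1, F s) + 0)) := havg.add hTends0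
  rw [add_zero] at hsum
  rw [hTeq]
  have : (fun n : ℕ => A n + (T n - A n)) = T := funext fun n => by ring
  rw [this] at hsum
  exact hsum
end
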